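/- arXiv:1905.01731 — 7 statements merged into one kernel-verified Lean document; each statement's English description precedes it below -/
import Mathlib

section
/- Let (X_γ)_{γ∈Γ} be a family of real strictly convex Banach spaces with dim X_γ ≥ 2 for every γ ∈ Γ, and let Z_∞ = ⊕_{γ∈Γ}^{ℓ∞} X_γ. Then every element of the closed unit ball of Z_∞ can be written as the mean (p + q)/2 of two extreme points p, q of the closed unit ball of Z_∞. -/
/-!
Split `2 • z` coordinatewise as `p γ + q γ` with `‖p γ‖ = ‖q γ‖ = 1`: since `dim X γ ≥ 2` the unit
sphere of `X γ` is connected, and on it `p ↦ ‖2 • z γ - p‖` is at most `1` at the unit vector in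
the direction of `z γ` and at least `1` at its antipode, so the intermediate value theorem gives
`p γ`. A point of the `ℓ∞`-sum whose coordinates all have norm one is extreme in the unit ball,
because by strict convexity each coordinate is extreme in the unit ball of its factor.
-/

open scoped ENNReal

open Set Metric

theorem mem_extremePoints_of_injective_of_mapsTo {𝕜 E F : Type*} [Semiring 𝕜] [PartialOrder 𝕜]
    [AddCommMonoid E] [Module 𝕜 E] [AddCommMonoid F] [Module 𝕜 F]
    {f : E →ₗ[𝕜] F} (hf : Function.Injective f) {A : Set E} {B : Set F} (hAB : MapsTo f A B)
    {x : E} (hx : x ∈ A) (hfx : f x ∈ extremePoints 𝕜 B) : x ∈ extremePoints 𝕜 A := by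
  refine ⟨hx, fun x₁ hx₁ x₂ hx₂ hseg ↦ hf <| hfx.2 (hAB hx₁) (hAB hx₂) ?_⟩
  obtain ⟨a, b, ha, hb, hab, rfl⟩ := hseg
  exact ⟨a, b, ha, hb, hab, by rw [map_add, map_smul, map_smul]⟩

namespace lp

variable {Γ : Type*} {X : Γ → Type*} [∀ γ, NormedAddCommGroup (X γ)]

theorem mem_closedBall_zero_iff_infty {f : lp X ∞} {r : ℝ} (hr : 0 ≤ r) :
    f ∈ closedBall (0 : lp X ∞) r ↔ ∀ γ, ‖f γ‖ ≤ r := by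
  rw [mem_closedBall_zero_iff]
  exact ⟨fun hf γ ↦ (norm_apply_le_norm ENNReal.top_ne_zero f γ).trans hf,
    norm_le_of_forall_le hr⟩

variable [∀ γ, NormedSpace ℝ (X γ)]

def coeLinearMap : lp X ∞ →ₗ[ℝ] ∀ γ, X γ where
  toFun f := f
  map_add' := coeFn_add
  map_smul' := coeFn_smul

theorem mem_extremePoints_closedBall_of_forall_norm_eq [∀ γ, StrictConvexSpace ℝ (X γ)]
    {f : lp X ∞} {r : ℝ} (hr : 0 < r) (hf : ∀ γ, ‖f γ‖ = r) :
    f ∈ extremePoints ℝ (closedBall (0 : lp X ∞) r) := by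
  refine mem_extremePoints_of_injective_of_mapsTo (f := coeLinearMap)
    (B := univ.pi fun _ ↦ closedBall 0 r) (fun _ _ h ↦ lp.ext h) (fun g hg γ _ ↦ ?_) ?_ ?_
  · exact mem_closedBall_zero_iff.2 ((mem_closedBall_zero_iff_infty hr.le).1 hg γ)
  · exact (mem_closedBall_zero_iff_infty hr.le).2 fun γ ↦ (hf γ).le
  · rw [extremePoints_pi]
    exact fun γ _ ↦ StrictConvexSpace.sphere_subset_extremePoints_closedBall 0 hr.ne'
      (mem_sphere_zero_iff_norm.2 (hf γ))

end lp

section NormedSpace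

variable {E : Type*} [NormedAddCommGroup E] [NormedSpace ℝ E]

theorem exists_norm_eq_sameRay [Nontrivial E] (w : E) {r : ℝ} (hr : 0 ≤ r) :
    ∃ u : E, ‖u‖ = r ∧ SameRay ℝ w u := by
  rcases eq_or_ne w 0 with rfl | hw
  · obtain ⟨u, hu⟩ := exists_norm_eq E hr
    exact ⟨u, hu, .zero_left u⟩
  · refine ⟨(r / ‖w‖) • w, ?_, SameRay.sameRay_nonneg_smul_right w (by positivity)⟩
    rw [norm_smul_of_nonneg (by positivity), div_mul_cancel₀ r (norm_ne_zero_iff.2 hw)]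

theorem exists_norm_eq_norm_sub_eq (hE : 1 < Module.rank ℝ E) {w : E} {r : ℝ} (hr : 0 ≤ r)
    (hw : ‖w‖ ≤ 2 * r) : ∃ p : E, ‖p‖ = r ∧ ‖w - p‖ = r := by
  have : Nontrivial E := rank_pos_iff_nontrivial.1 (zero_lt_one.trans hE)
  obtain ⟨u, hu, hwu⟩ := exists_norm_eq_sameRay w hr
  have hnear : ‖w - u‖ ≤ r := by
    rw [hwu.norm_sub, hu, abs_sub_le_iff]
    constructor <;> linarith [norm_nonneg w]
  have hfar : r ≤ ‖w - -u‖ := by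
    rw [sub_neg_eq_add, hwu.norm_add, hu]
    linarith [norm_nonneg w]
  obtain ⟨p, hp, hpr⟩ := (isConnected_sphere hE 0 hr).isPreconnected.intermediate_value
    (mem_sphere_zero_iff_norm.2 hu) (mem_sphere_zero_iff_norm.2 ((norm_neg u).trans hu))
    (continuous_const.sub continuous_id).norm.continuousOn ⟨hnear, hfar⟩
  exact ⟨p, mem_sphere_zero_iff_norm.1 hp, hpr⟩

end NormedSpace

theorem mem_closedBall_eq_mean_extremePoints_general {Γ : Type*} (X : Γ → Type*)
    [∀ γ, NormedAddCommGroup (X γ)] [∀ γ, NormedSpace ℝ (X γ)]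
    [∀ γ, StrictConvexSpace ℝ (X γ)]
    (hdim : ∀ γ, 2 ≤ Module.rank ℝ (X γ))
    (z : lp X ∞) (hz : z ∈ Metric.closedBall (0 : lp X ∞) 1) :
    ∃ p ∈ Set.extremePoints ℝ (Metric.closedBall (0 : lp X ∞) 1),
      ∃ q ∈ Set.extremePoints ℝ (Metric.closedBall (0 : lp X ∞) 1),
        z = (1 / 2 : ℝ) • (p + q) := by
  have hz2 (γ : Γ) : ‖(2 : ℝ) • z γ‖ ≤ 2 * 1 := by
    rw [norm_smul, Real.norm_two]
    exact mul_le_mul_of_nonneg_left ((lp.mem_closedBall_zero_iff_infty zero_le_one).1 hz γ)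
      zero_le_two
  choose p hp hq using fun γ ↦
    exists_norm_eq_norm_sub_eq (Cardinal.one_lt_two.trans_le (hdim γ)) zero_le_one (hz2 γ)
  let p' : lp X ∞ := ⟨p, memℓp_infty ⟨1, by rintro _ ⟨γ, rfl⟩; exact (hp γ).le⟩⟩
  refine ⟨p', lp.mem_extremePoints_closedBall_of_forall_norm_eq one_pos hp,
    (2 : ℝ) • z - p', lp.mem_extremePoints_closedBall_of_forall_norm_eq one_pos hq, ?_⟩
  rw [add_sub_cancel, smul_smul]
  norm_num

/-- If `(X γ)` is a family of strictly convex real Banach spaces of dimension at least 2,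
then every element of the closed unit ball of the ℓ∞-sum `lp X ∞` is the mean of two
extreme points of that ball. -/
theorem mem_closedBall_eq_mean_extremePoints {Γ : Type*} (X : Γ → Type*)
    [∀ γ, NormedAddCommGroup (X γ)] [∀ γ, NormedSpace ℝ (X γ)] [∀ γ, CompleteSpace (X γ)]
    [∀ γ, StrictConvexSpace ℝ (X γ)]
    (hdim : ∀ γ, 2 ≤ Module.rank ℝ (X γ))
    (z : lp X ∞) (hz : z ∈ Metric.closedBall (0 : lp X ∞) 1) :
    ∃ p ∈ Set.extremePoints ℝ (Metric.closedBall (0 : lp X ∞) 1),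
      ∃ q ∈ Set.extremePoints ℝ (Metric.closedBall (0 : lp X ∞) 1),
        z = (1 / 2 : ℝ) • (p + q) :=
  mem_closedBall_eq_mean_extremePoints_general X hdim z hz
end

section
/- Let (X_γ)_{γ∈Γ} be a family of real strictly convex Banach spaces with dim X_γ ≥ 2 for every γ ∈ Γ, and let Z_∞ = ⊕_{γ∈Γ}^{ℓ∞} X_γ. Then every convex body in Z_∞ satisfies the strong Mankiewicz property: every surjective isometry from a convex body C ⊆ Z_∞ onto an arbitrary convex subset L of an arbitrary real normed space Y is affine. -/
/-!
Call `v ∈ Z_∞` flat if all its coordinates have the same norm. If `q - p` is flat, then by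
strict convexity of every coordinate space, `midpoint p q` is the only point within
`dist p q / 2` of both `p` and `q`, so an isometry `Δ` onto a convex set preserves this
midpoint: the preimage of `midpoint (Δ p) (Δ q)` is such a point. Since `dim X_γ ≥ 2`, spheres
in `X_γ` are connected, and any `q - p` splits as `u + w` with `u`, `w` flat of norm
`dist p q / 2`. Comparing the flat pairs `(p + u, q)`, `(p, q - u)` and their midpoints shows
that `Δ` preserves `midpoint p q` whenever the ball of radius `dist p q / 2` around it lies in
`C`. Along a segment in the interior of `C`, `Δ` therefore satisfies a local midpoint identity,
which forces it to be affine there by a maximum principle; continuity extends this to all of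
`C ⊆ closure (interior C)`.
-/

open scoped ENNReal Topology
open Metric Set AffineMap Filter

theorem exists_norm_eq_and_norm_sub_eq {E : Type*} [NormedAddCommGroup E] [NormedSpace ℝ E]
    (hE : 1 < Module.rank ℝ E) {v : E} {R : ℝ} (hv : ‖v‖ ≤ 2 * R) :
    ∃ u : E, ‖u‖ = R ∧ ‖v - u‖ = R := by
  have hR : 0 ≤ R := by linarith [norm_nonneg v]
  have hS : IsConnected (sphere (0 : E) R) := isConnected_sphere hE 0 hR
  rcases eq_or_ne v 0 with rfl | hv0
  · obtain ⟨u, hu⟩ := hS.nonempty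
    rw [mem_sphere_zero_iff_norm] at hu
    exact ⟨u, hu, by rwa [zero_sub, norm_neg]⟩
  have hv' : 0 < ‖v‖ := norm_pos_iff.mpr hv0
  set u₀ : E := (R / ‖v‖) • v
  have hu₀ : ‖u₀‖ = R := by
    rw [norm_smul, Real.norm_of_nonneg (by positivity), div_mul_cancel₀ _ hv'.ne']
  have hnear : ‖v - u₀‖ ≤ R := by
    rw [show v - u₀ = (1 - R / ‖v‖) • v by module, norm_smul, Real.norm_eq_abs,
      ← abs_of_pos hv', ← abs_mul, abs_of_pos hv', sub_mul, div_mul_cancel₀ _ hv'.ne', one_mul,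
      abs_le]
    constructor <;> linarith
  have hfar : R ≤ ‖v - -u₀‖ := by
    rw [sub_neg_eq_add, show v + u₀ = (1 + R / ‖v‖) • v by module, norm_smul,
      Real.norm_of_nonneg (by positivity), add_mul, div_mul_cancel₀ _ hv'.ne', one_mul]
    linarith
  obtain ⟨u, hu, huv⟩ := hS.isPreconnected.intermediate_value
    (by simpa using hu₀ : u₀ ∈ sphere (0 : E) R) (by simpa using hu₀ : -u₀ ∈ sphere (0 : E) R)
    (continuous_const.sub continuous_id).norm.continuousOn ⟨hnear, hfar⟩
  exact ⟨u, mem_sphere_zero_iff_norm.mp hu, huv⟩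

theorem eq_midpoint_of_dist_le {V P : Type*} [NormedAddCommGroup V] [NormedSpace ℝ V]
    [StrictConvexSpace ℝ V] [MetricSpace P] [NormedAddTorsor V P] {x y z : P} {r : ℝ}
    (hxy : dist x y ≤ r) (hyz : dist y z ≤ r) (hxz : 2 * r ≤ dist x z) :
    y = midpoint ℝ x z := by
  have := dist_triangle x y z
  exact eq_midpoint_of_dist_eq_half (by linarith) (by linarith)

namespace lp

variable {Γ : Type*} {X : Γ → Type*} [∀ γ, NormedAddCommGroup (X γ)]

theorem dist_apply_le (x y : lp X ∞) (γ : Γ) : dist (x γ) (y γ) ≤ dist x y := by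
  simpa [dist_eq_norm] using norm_apply_le_norm ENNReal.top_ne_zero (x - y) γ

variable [∀ γ, NormedSpace ℝ (X γ)]

theorem midpoint_apply (x y : lp X ∞) (γ : Γ) : midpoint ℝ x y γ = midpoint ℝ (x γ) (y γ) :=
  (evalCLM ℝ X ∞ γ).toLinearMap.toAffineMap.map_midpoint x y

theorem exists_forall_norm_apply_eq (hX : ∀ γ, 1 < Module.rank ℝ (X γ)) {v : lp X ∞} {R : ℝ}
    (hv : ‖v‖ ≤ 2 * R) : ∃ u : lp X ∞, ∀ γ, ‖u γ‖ = R ∧ ‖(v - u) γ‖ = R := by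
  choose u hu using fun γ ↦
    exists_norm_eq_and_norm_sub_eq (hX γ) ((norm_apply_le_norm ENNReal.top_ne_zero v γ).trans hv)
  exact ⟨⟨u, memℓp_infty ⟨R, by rintro _ ⟨γ, rfl⟩; exact (hu γ).1.le⟩⟩, hu⟩

theorem eq_midpoint_of_dist_le [∀ γ, StrictConvexSpace ℝ (X γ)] {x y z : lp X ∞} {r : ℝ}
    (hflat : ∀ γ, ‖(z - x) γ‖ = 2 * r) (hxy : dist x y ≤ r) (hyz : dist y z ≤ r) :
    y = midpoint ℝ x z := by
  ext γ
  rw [midpoint_apply]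
  refine _root_.eq_midpoint_of_dist_le ((dist_apply_le x y γ).trans hxy)
    ((dist_apply_le y z γ).trans hyz) ?_
  rw [dist_comm, dist_eq_norm, ← hflat γ, coeFn_sub, Pi.sub_apply]

end lp

theorem nonpos_of_two_mul_le_add {ψ : ℝ → ℝ} (hψ : ContinuousOn ψ (Icc 0 1)) (h0 : ψ 0 ≤ 0)
    (h1 : ψ 1 ≤ 0)
    (hmid : ∀ s ∈ Ioo (0 : ℝ) 1, ∃ h > 0, h ≤ s ∧ h ≤ 1 - s ∧ 2 * ψ s ≤ ψ (s - h) + ψ (s + h)) :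
    ∀ s ∈ Icc (0 : ℝ) 1, ψ s ≤ 0 := by
  intro s hs
  refine le_of_forall_pos_le_add fun ε hε ↦ ?_
  -- adding the strictly convex `ε t (t - 1)` rules out a maximum in the open interval
  set χ : ℝ → ℝ := fun t ↦ ψ t + ε * (t * (t - 1))
  obtain ⟨t₀, ht₀, hmax⟩ := isCompact_Icc.exists_isMaxOn (nonempty_Icc.2 zero_le_one)
    (hψ.add (by fun_prop) : ContinuousOn χ (Icc 0 1))
  have hχt₀ : χ t₀ ≤ 0 := by
    rcases ht₀.1.eq_or_lt with rfl | hlt₀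
    · simpa [χ] using h0
    rcases ht₀.2.eq_or_lt with rfl | hlt₁
    · simpa [χ] using h1
    obtain ⟨h, hpos, hh₀, hh₁, hψh⟩ := hmid t₀ ⟨hlt₀, hlt₁⟩
    have hminus : χ (t₀ - h) ≤ χ t₀ := hmax ⟨by linarith, by linarith⟩
    have hplus : χ (t₀ + h) ≤ χ t₀ := hmax ⟨by linarith, by linarith⟩
    simp only [χ] at hminus hplus
    nlinarith [mul_pos hε (mul_pos hpos hpos)]
  have hχs : χ s ≤ χ t₀ := hmax hs
  simp only [χ] at hχs hχt₀
  have hs' : s * (1 - s) ≤ 1 := by nlinarith [hs.1, hs.2]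
  nlinarith [mul_le_mul_of_nonneg_left hs' hε.le]

theorem eq_lineMap_of_eq_midpoint {E : Type*} [NormedAddCommGroup E] [NormedSpace ℝ E]
    {g : ℝ → E} (hg : ContinuousOn g (Icc 0 1))
    (hmid : ∀ s ∈ Ioo (0 : ℝ) 1, ∃ h > 0, h ≤ s ∧ h ≤ 1 - s ∧
      g s = midpoint ℝ (g (s - h)) (g (s + h))) :
    ∀ s ∈ Icc (0 : ℝ) 1, g s = lineMap (g 0) (g 1) s := by
  set φ : ℝ → E := fun s ↦ g s - lineMap (g 0) (g 1) s
  suffices ∀ s ∈ Icc (0 : ℝ) 1, ‖φ s‖ ≤ 0 from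
    fun s hs ↦ sub_eq_zero.mp (norm_le_zero_iff.mp (this s hs))
  refine nonpos_of_two_mul_le_add (hg.sub (by fun_prop)).norm (by simp [φ]) (by simp [φ])
    fun s hs ↦ ?_
  obtain ⟨h, hpos, hh₀, hh₁, hgs⟩ := hmid s hs
  refine ⟨h, hpos, hh₀, hh₁, ?_⟩
  have hφs : φ s = (2⁻¹ : ℝ) • (φ (s - h) + φ (s + h)) := by
    simp only [φ, hgs, midpoint_eq_smul_add, invOf_eq_inv, lineMap_apply_module]
    module
  rw [hφs, norm_smul, Real.norm_of_nonneg (by norm_num)]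
  linarith [norm_add_le (φ (s - h)) (φ (s + h))]

theorem Convex.map_lineMap_of_interior {E Y : Type*} [AddCommGroup E] [Module ℝ E]
    [TopologicalSpace E] [IsTopologicalAddGroup E] [ContinuousSMul ℝ E] [AddCommGroup Y]
    [Module ℝ Y] [TopologicalSpace Y] [ContinuousAdd Y] [ContinuousConstSMul ℝ Y] [T2Space Y]
    {C : Set E} {Δ : E → Y} (hC : Convex ℝ C) (hCint : (interior C).Nonempty)
    (hΔ : ContinuousOn Δ C) {t : ℝ} (ht : t ∈ Icc (0 : ℝ) 1)
    (h : ∀ p ∈ interior C, ∀ q ∈ interior C, Δ (lineMap p q t) = lineMap (Δ p) (Δ q) t) :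
    ∀ p ∈ C, ∀ q ∈ C, Δ (lineMap p q t) = lineMap (Δ p) (Δ q) t := by
  have hEq : EqOn (fun x : E × E ↦ Δ (lineMap x.1 x.2 t)) (fun x ↦ lineMap (Δ x.1) (Δ x.2) t)
      (C ×ˢ C) := by
    refine EqOn.of_subset_closure (s := interior C ×ˢ interior C) (fun x hx ↦ h _ hx.1 _ hx.2)
      (hΔ.comp (by fun_prop) fun x hx ↦ hC.lineMap_mem hx.1 hx.2 ht) ?_
      (prod_mono interior_subset interior_subset) ?_
    · have h₁ : ContinuousOn (fun x : E × E ↦ Δ x.1) (C ×ˢ C) :=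
        hΔ.comp continuousOn_fst fun x hx ↦ hx.1
      have h₂ : ContinuousOn (fun x : E × E ↦ Δ x.2) (C ×ˢ C) :=
        hΔ.comp continuousOn_snd fun x hx ↦ hx.2
      simp only [lineMap_apply_module]
      exact (h₁.const_smul (1 - t)).add (h₂.const_smul t)
    · rw [closure_prod_eq, hC.closure_interior_eq_closure_of_nonempty_interior hCint]
      exact prod_mono subset_closure subset_closure
  exact fun p hp q hq ↦ hEq (x := (p, q)) ⟨hp, hq⟩

theorem continuousOn_of_dist_eq {α β : Type*} [PseudoMetricSpace α] [PseudoMetricSpace β]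
    {C : Set α} {f : α → β} (hf : ∀ a ∈ C, ∀ b ∈ C, dist (f a) (f b) = dist a b) :
    ContinuousOn f C :=
  (LipschitzOnWith.of_dist_le_mul (K := 1) fun a ha b hb ↦ by simp [hf a ha b hb]).continuousOn

section Isometry

variable {Γ : Type*} {X : Γ → Type*} [∀ γ, NormedAddCommGroup (X γ)] [∀ γ, NormedSpace ℝ (X γ)]
  [∀ γ, StrictConvexSpace ℝ (X γ)] {Y : Type*} [NormedAddCommGroup Y] [NormedSpace ℝ Y]
  {C : Set (lp X ∞)} {Δ : lp X ∞ → Y}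

theorem map_midpoint_of_forall_norm_apply_eq
    (hiso : ∀ a ∈ C, ∀ b ∈ C, dist (Δ a) (Δ b) = dist a b) (hconv : Convex ℝ (Δ '' C))
    {p q : lp X ∞} (hp : p ∈ C) (hq : q ∈ C) {r : ℝ} (hr : 0 ≤ r)
    (hflat : ∀ γ, ‖(q - p) γ‖ = 2 * r) : Δ (midpoint ℝ p q) = midpoint ℝ (Δ p) (Δ q) := by
  obtain ⟨m, hm, hΔm⟩ := hconv.midpoint_mem (mem_image_of_mem Δ hp) (mem_image_of_mem Δ hq)
  have hpq : dist p q ≤ 2 * r := by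
    rw [dist_comm, dist_eq_norm]
    exact lp.norm_le_of_forall_le (by positivity) fun γ ↦ (hflat γ).le
  have hpm : dist p m ≤ r := by
    rw [← hiso p hp m hm, hΔm, dist_left_midpoint, hiso p hp q hq]
    norm_num
    linarith
  have hmq : dist m q ≤ r := by
    rw [← hiso m hm q hq, hΔm, dist_midpoint_right, hiso p hp q hq]
    norm_num
    linarith
  rw [← lp.eq_midpoint_of_dist_le hflat hpm hmq, hΔm]

theorem map_midpoint_of_flat_split
    (hiso : ∀ a ∈ C, ∀ b ∈ C, dist (Δ a) (Δ b) = dist a b) (hconv : Convex ℝ (Δ '' C))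
    {p q u : lp X ∞} {R : ℝ} (hR : 0 ≤ R) (hu : ∀ γ, ‖u γ‖ = R ∧ ‖(q - p - u) γ‖ = R)
    (hp : p ∈ C) (hq : q ∈ C) (ha : p + u ∈ C) (hb : q - u ∈ C)
    (haq : midpoint ℝ (p + u) q ∈ C) (hpb : midpoint ℝ p (q - u) ∈ C) :
    Δ (midpoint ℝ p q) = midpoint ℝ (Δ p) (Δ q) := by
  have hu_le : ‖u‖ ≤ R := lp.norm_le_of_forall_le hR fun γ ↦ (hu γ).1.le
  have hΔaq : Δ (midpoint ℝ (p + u) q) = midpoint ℝ (Δ (p + u)) (Δ q) :=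
    map_midpoint_of_forall_norm_apply_eq hiso hconv ha hq (r := R / 2) (by positivity)
      fun γ ↦ by rw [show q - (p + u) = q - p - u by abel, (hu γ).2]; ring
  have hΔpb : Δ (midpoint ℝ p (q - u)) = midpoint ℝ (Δ p) (Δ (q - u)) :=
    map_midpoint_of_forall_norm_apply_eq hiso hconv hp hb (r := R / 2) (by positivity)
      fun γ ↦ by rw [show q - u - p = q - p - u by abel, (hu γ).2]; ring
  obtain ⟨m, hm, hΔm⟩ := hconv.midpoint_mem (mem_image_of_mem Δ hp) (mem_image_of_mem Δ hq)
  have h₁ : dist (midpoint ℝ (p + u) q) m ≤ R / 2 := by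
    rw [← hiso _ haq m hm, hΔaq, hΔm]
    refine (dist_midpoint_midpoint_le _ _ _ _).trans ?_
    rw [hiso _ ha p hp, dist_self, dist_eq_norm, add_sub_cancel_left]
    linarith
  have h₂ : dist m (midpoint ℝ p (q - u)) ≤ R / 2 := by
    rw [← hiso m hm _ hpb, hΔpb, hΔm]
    refine (dist_midpoint_midpoint_le _ _ _ _).trans ?_
    rw [hiso q hq _ hb, dist_self, dist_eq_norm, sub_sub_cancel]
    linarith
  have hflat : ∀ γ, ‖(midpoint ℝ p (q - u) - midpoint ℝ (p + u) q) γ‖ = 2 * (R / 2) := by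
    intro γ
    rw [show midpoint ℝ p (q - u) - midpoint ℝ (p + u) q = -u by
      simp only [midpoint_eq_smul_add, invOf_eq_inv]; module]
    rw [lp.coeFn_neg, Pi.neg_apply, norm_neg, (hu γ).1]
    ring
  have hm_eq : m = midpoint ℝ p q := by
    rw [lp.eq_midpoint_of_dist_le hflat h₁ h₂]
    simp only [midpoint_eq_smul_add, invOf_eq_inv]
    module
  rw [← hm_eq, hΔm]

theorem map_midpoint_of_closedBall_subset (hX : ∀ γ, 1 < Module.rank ℝ (X γ))
    (hiso : ∀ a ∈ C, ∀ b ∈ C, dist (Δ a) (Δ b) = dist a b) (hconv : Convex ℝ (Δ '' C))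
    {p q : lp X ∞} (hball : closedBall (midpoint ℝ p q) (dist p q / 2) ⊆ C) :
    Δ (midpoint ℝ p q) = midpoint ℝ (Δ p) (Δ q) := by
  set R := dist p q / 2 with hR_def
  have hR : 0 ≤ R := by positivity
  have hmem : ∀ x, ‖x - midpoint ℝ p q‖ ≤ R → x ∈ C :=
    fun x hx ↦ hball (by rwa [mem_closedBall, dist_eq_norm])
  obtain ⟨u, hu⟩ := lp.exists_forall_norm_apply_eq hX (v := q - p) (R := R) (by
    rw [← dist_eq_norm, dist_comm]; linarith)
  have hu_le : ‖u‖ ≤ R := lp.norm_le_of_forall_le hR fun γ ↦ (hu γ).1.le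
  have hw_le : ‖q - p - u‖ ≤ R := lp.norm_le_of_forall_le hR fun γ ↦ (hu γ).2.le
  have hhalf : ∀ x y : lp X ∞, ‖x‖ ≤ R → ‖y‖ ≤ R → ‖(2⁻¹ : ℝ) • (x - y)‖ ≤ R := by
    intro x y hx hy
    rw [norm_smul, Real.norm_of_nonneg (by norm_num)]
    linarith [norm_sub_le x y]
  have h0 : ‖(0 : lp X ∞)‖ ≤ R := by simpa using hR
  refine map_midpoint_of_flat_split hiso hconv hR hu
    (hmem p ?_) (hmem q ?_) (hmem _ ?_) (hmem _ ?_) (hmem _ ?_) (hmem _ ?_)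
  · rw [← dist_eq_norm, dist_left_midpoint]; norm_num; linarith
  · rw [← dist_eq_norm, dist_right_midpoint]; norm_num; linarith
  · rw [show p + u - midpoint ℝ p q = (2⁻¹ : ℝ) • (u - (q - p - u)) by
      simp only [midpoint_eq_smul_add, invOf_eq_inv]; module]
    exact hhalf _ _ hu_le hw_le
  · rw [show q - u - midpoint ℝ p q = (2⁻¹ : ℝ) • (q - p - u - u) by
      simp only [midpoint_eq_smul_add, invOf_eq_inv]; module]
    exact hhalf _ _ hw_le hu_le
  · rw [show midpoint ℝ (p + u) q - midpoint ℝ p q = (2⁻¹ : ℝ) • (u - 0) by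
      simp only [midpoint_eq_smul_add, invOf_eq_inv]; module]
    exact hhalf _ _ hu_le h0
  · rw [show midpoint ℝ p (q - u) - midpoint ℝ p q = (2⁻¹ : ℝ) • (0 - u) by
      simp only [midpoint_eq_smul_add, invOf_eq_inv]; module]
    exact hhalf _ _ h0 hu_le

theorem map_lineMap_of_mem_interior (hX : ∀ γ, 1 < Module.rank ℝ (X γ))
    (hiso : ∀ a ∈ C, ∀ b ∈ C, dist (Δ a) (Δ b) = dist a b) (hconv : Convex ℝ (Δ '' C))
    (hC : Convex ℝ C) {p q : lp X ∞} (hp : p ∈ interior C) (hq : q ∈ interior C) :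
    ∀ t ∈ Icc (0 : ℝ) 1, Δ (lineMap p q t) = lineMap (Δ p) (Δ q) t := by
  have hint : ∀ s ∈ Icc (0 : ℝ) 1, lineMap p q s ∈ interior C :=
    fun s hs ↦ hC.interior.lineMap_mem hp hq hs
  have hg : ContinuousOn (fun s : ℝ ↦ Δ (lineMap p q s)) (Icc 0 1) :=
    (continuousOn_of_dist_eq hiso).comp lineMap_continuous.continuousOn
      fun s hs ↦ interior_subset (hint s hs)
  have hmid : ∀ s ∈ Ioo (0 : ℝ) 1, ∃ h > 0, h ≤ s ∧ h ≤ 1 - s ∧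
      Δ (lineMap p q s) = midpoint ℝ (Δ (lineMap p q (s - h))) (Δ (lineMap p q (s + h))) := by
    intro s hs
    obtain ⟨ε, hε, hball⟩ :=
      Metric.isOpen_iff.mp isOpen_interior _ (hint s (Ioo_subset_Icc_self hs))
    have hsmall : ∀ᶠ h in 𝓝 (0 : ℝ), h < s ∧ h < 1 - s ∧ h * dist p q < ε :=
      (eventually_lt_nhds hs.1).and ((eventually_lt_nhds (sub_pos.2 hs.2)).and
        ((continuous_id.mul continuous_const).tendsto' 0 0 (by simp) |>.eventually
          (eventually_lt_nhds hε)))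
    obtain ⟨h, ⟨hs₀, hs₁, hε'⟩, hpos⟩ := (hsmall.filter_mono nhdsWithin_le_nhds |>.and
      self_mem_nhdsWithin : ∀ᶠ h in 𝓝[>] (0 : ℝ), _ ∧ 0 < h).exists
    refine ⟨h, hpos, hs₀.le, hs₁.le, ?_⟩
    have hcenter : midpoint ℝ (lineMap p q (s - h)) (lineMap p q (s + h)) = lineMap p q s := by
      rw [← map_midpoint, midpoint_eq_smul_add, invOf_eq_inv]
      congr 1
      ring
    have hdist : dist (lineMap p q (s - h)) (lineMap p q (s + h)) / 2 = h * dist p q := by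
      rw [dist_lineMap_lineMap, Real.dist_eq, abs_of_neg (by linarith)]
      ring
    rw [← map_midpoint_of_closedBall_subset hX hiso hconv (by
      rw [hcenter, hdist]
      exact (closedBall_subset_ball hε').trans (hball.trans interior_subset)), hcenter]
  simpa using eq_lineMap_of_eq_midpoint hg hmid

end Isometry

theorem convexBody_strongMankiewicz_general {Γ : Type*} (X : Γ → Type*)
    [∀ γ, NormedAddCommGroup (X γ)] [∀ γ, NormedSpace ℝ (X γ)]
    [∀ γ, StrictConvexSpace ℝ (X γ)]
    (hdim : ∀ γ, 2 ≤ Module.rank ℝ (X γ))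
    (C : Set (lp X ∞)) (hC₂ : Convex ℝ C) (hC₃ : (interior C).Nonempty)
    (Y : Type*) [NormedAddCommGroup Y] [NormedSpace ℝ Y]
    (L : Set Y) (hL : Convex ℝ L)
    (Δ : lp X ∞ → Y) (hiso : ∀ a ∈ C, ∀ b ∈ C, dist (Δ a) (Δ b) = dist a b)
    (himage : Δ '' C = L) :
    ∀ a ∈ C, ∀ b ∈ C, ∀ t : ℝ, 0 ≤ t → t ≤ 1 →
      Δ ((1 - t) • a + t • b) = (1 - t) • Δ a + t • Δ b := by
  intro a ha b hb t ht₀ ht₁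
  have hX : ∀ γ, 1 < Module.rank ℝ (X γ) := fun γ ↦ Cardinal.one_lt_two.trans_le (hdim γ)
  have hconv : Convex ℝ (Δ '' C) := himage ▸ hL
  have := hC₂.map_lineMap_of_interior hC₃ (continuousOn_of_dist_eq hiso) ⟨ht₀, ht₁⟩
    (fun p hp q hq ↦ map_lineMap_of_mem_interior hX hiso hconv hC₂ hp hq t ⟨ht₀, ht₁⟩) a ha b hb
  simpa only [lineMap_apply_module] using this

/-- Every convex body in the ℓ∞-sum of a family of strictly convex real Banach spaces of
dimension at least 2 satisfies the strong Mankiewicz property: every surjective isometry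
from such a convex body `C` onto an arbitrary convex subset `L` of an arbitrary real
normed space `Y` is affine. -/
theorem convexBody_strongMankiewicz {Γ : Type*} (X : Γ → Type*)
    [∀ γ, NormedAddCommGroup (X γ)] [∀ γ, NormedSpace ℝ (X γ)] [∀ γ, CompleteSpace (X γ)]
    [∀ γ, StrictConvexSpace ℝ (X γ)]
    (hdim : ∀ γ, 2 ≤ Module.rank ℝ (X γ))
    (C : Set (lp X ∞)) (hC₁ : IsClosed C) (hC₂ : Convex ℝ C) (hC₃ : (interior C).Nonempty)
    (Y : Type*) [NormedAddCommGroup Y] [NormedSpace ℝ Y]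
    (L : Set Y) (hL : Convex ℝ L)
    (Δ : lp X ∞ → Y) (hiso : ∀ a ∈ C, ∀ b ∈ C, dist (Δ a) (Δ b) = dist a b)
    (himage : Δ '' C = L) :
    ∀ a ∈ C, ∀ b ∈ C, ∀ t : ℝ, 0 ≤ t → t ≤ 1 →
      Δ ((1 - t) • a + t • b) = (1 - t) • Δ a + t • Δ b :=
  convexBody_strongMankiewicz_general X hdim C hC₂ hC₃ Y L hL Δ hiso himage
end

section
/- Let X be a real Banach space with dim X ≥ 2. Then every element x of the closed unit ball of X can be expressed as the mean x = (y + z)/2 of two elements y, z of the unit sphere of X. -/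
/-!
The function `y ↦ ‖2x - y‖` is continuous on the unit sphere, which is connected once
`dim X ≥ 2`. Along the unit vector `u` in the direction of `x` it takes the value `|2‖x‖ - 1| ≤ 1`
at `u` and `2‖x‖ + 1 ≥ 1` at `-u`, so it equals `1` at some `y`, and then `z = 2x - y` is also a
unit vector with `x = (y + z) / 2`.
-/

open Metric

universe u

variable {E : Type u} [NormedAddCommGroup E] [NormedSpace ℝ E]

theorem exists_norm_eq_one_smul_eq [Nontrivial E] (x : E) : ∃ u : E, ‖u‖ = 1 ∧ ‖x‖ • u = x := by
  by_cases hx : x = 0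
  · obtain ⟨u, hu⟩ := exists_norm_eq E zero_le_one
    exact ⟨u, hu, by simp [hx]⟩
  · exact ⟨‖x‖⁻¹ • x, norm_smul_inv_norm hx, smul_inv_smul₀ (norm_ne_zero_iff.mpr hx) x⟩

theorem sphere_inter_sphere_nonempty (hE : 1 < Module.rank ℝ E) {r s : ℝ} {w : E}
    (h_lower : |‖w‖ - r| ≤ s) (h_upper : s ≤ ‖w‖ + r) :
    (sphere (0 : E) r ∩ sphere w s).Nonempty := by
  have hr : 0 ≤ r := by linarith [le_abs_self (‖w‖ - r)]
  have : Nontrivial E := rank_pos_iff_nontrivial.mp (zero_lt_one.trans hE)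
  obtain ⟨u, hu, hwu⟩ := exists_norm_eq_one_smul_eq w
  have hconn : IsPreconnected (sphere (0 : E) r) :=
    (isPathConnected_sphere hE 0 hr).isConnected.isPreconnected
  have h_near : r • u ∈ sphere (0 : E) r := by simp [norm_smul, hu, abs_of_nonneg hr]
  have h_far : -(r • u) ∈ sphere (0 : E) r := by simp [norm_smul, hu, abs_of_nonneg hr]
  have h_dist_near : dist (r • u) w = |‖w‖ - r| := by
    rw [dist_comm, dist_eq_norm]
    conv_lhs => rw [← hwu, ← sub_smul, norm_smul, hu, mul_one, Real.norm_eq_abs]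
  have h_dist_far : dist (-(r • u)) w = ‖w‖ + r := by
    rw [dist_comm, dist_eq_norm, sub_neg_eq_add]
    conv_lhs => rw [← hwu, ← add_smul, norm_smul, hu, mul_one]
    exact Real.norm_of_nonneg (by positivity)
  exact hconn.intermediate_value h_near h_far (continuous_id.dist continuous_const).continuousOn
    ⟨h_dist_near ▸ h_lower, h_dist_far ▸ h_upper⟩

theorem mem_closedBall_eq_mean_sphere_general (X : Type*) [NormedAddCommGroup X] [NormedSpace ℝ X]
    (hdim : 2 ≤ Module.rank ℝ X)
    (x : X) (hx : x ∈ Metric.closedBall (0 : X) 1) :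
    ∃ y ∈ Metric.sphere (0 : X) 1, ∃ z ∈ Metric.sphere (0 : X) 1,
      x = (1 / 2 : ℝ) • (y + z) := by
  have h2x : ‖(2 : ℝ) • x‖ ≤ 2 := by
    rw [mem_closedBall_zero_iff] at hx
    rw [norm_smul, Real.norm_two]
    linarith
  have h2x_nonneg := norm_nonneg ((2 : ℝ) • x)
  obtain ⟨y, hy, hyx⟩ := sphere_inter_sphere_nonempty (r := 1) (s := 1) (w := (2 : ℝ) • x)
    (lt_of_lt_of_le (by norm_num) hdim) (abs_le.mpr ⟨by linarith, by linarith⟩) (by linarith)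
  refine ⟨y, hy, (2 : ℝ) • x - y, ?_, ?_⟩
  · rwa [mem_sphere_zero_iff_norm, ← dist_eq_norm, dist_comm]
  · rw [add_sub_cancel, smul_smul]
    norm_num

/-- In a real Banach space of dimension at least 2, every element of the closed unit ball
is the mean of two elements of the unit sphere. -/
theorem mem_closedBall_eq_mean_sphere (X : Type*) [NormedAddCommGroup X] [NormedSpace ℝ X]
    [CompleteSpace X] (hdim : 2 ≤ Module.rank ℝ X)
    (x : X) (hx : x ∈ Metric.closedBall (0 : X) 1) :
    ∃ y ∈ Metric.sphere (0 : X) 1, ∃ z ∈ Metric.sphere (0 : X) 1,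
      x = (1 / 2 : ℝ) • (y + z) :=
  mem_closedBall_eq_mean_sphere_general X hdim x hx
end

section
/- Let (X_γ)_{γ∈Γ} be a family of real Banach spaces with dim X_γ ≥ 2 for every γ ∈ Γ, and let Z_∞ = ⊕_{γ∈Γ}^{ℓ∞} X_γ. Then every element z of the closed unit ball of Z_∞ can be written as z = (x + y)/2 with x, y ∈ Z_∞ satisfying ‖x(γ)‖_{X_γ} = 1 = ‖y(γ)‖_{X_γ} for all γ ∈ Γ. -/
/-!
In a real normed space of dimension at least 2 the unit sphere is connected. Write a vector
`v` with `‖v‖ ≤ 1` as `‖v‖ • a` with `‖a‖ = 1`; on the sphere, `u ↦ ‖2 • v - u‖` is at most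
`1` at `a` and at least `1` at `-a`, so it takes the value `1` at some `u`, and
`v = (u + (2 • v - u)) / 2` is the midpoint of two unit vectors. In the ℓ∞-sum this is done
coordinatewise: families of unit vectors are bounded, hence lie in `lp X ∞`.
-/

open scoped ENNReal

open Metric

section NormedSpace

variable {E : Type*} [NormedAddCommGroup E] [NormedSpace ℝ E]

lemma exists_norm_eq_one_and_eq_norm_smul [Nontrivial E] (v : E) :
    ∃ a : E, ‖a‖ = 1 ∧ v = ‖v‖ • a := by
  rcases eq_or_ne v 0 with rfl | hv
  · obtain ⟨a, ha⟩ := exists_norm_eq E zero_le_one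
    exact ⟨a, ha, by simp⟩
  · exact ⟨‖v‖⁻¹ • v, norm_smul_inv_norm hv,
      by rw [smul_smul, mul_inv_cancel₀ (norm_ne_zero_iff.2 hv), one_smul]⟩

lemma exists_mem_sphere_dist_eq (h : 1 < Module.rank ℝ E) {r t : ℝ} (p : E)
    {a b : E} (ha : a ∈ sphere (0 : E) r) (hb : b ∈ sphere (0 : E) r)
    (hat : dist p a ≤ t) (htb : t ≤ dist p b) :
    ∃ u ∈ sphere (0 : E) r, dist p u = t :=
  (isPreconnected_sphere h 0 r).intermediate_value ha hb
    (continuous_const.dist continuous_id).continuousOn ⟨hat, htb⟩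

lemma exists_norm_eq_one_eq_half_smul_add (h : 1 < Module.rank ℝ E) {v : E} (hv : ‖v‖ ≤ 1) :
    ∃ u w : E, ‖u‖ = 1 ∧ ‖w‖ = 1 ∧ v = (1 / 2 : ℝ) • (u + w) := by
  have : Nontrivial E := rank_pos_iff_nontrivial.1 (zero_lt_one.trans h)
  obtain ⟨a, ha, hva⟩ := exists_norm_eq_one_and_eq_norm_smul v
  have dist_sub : dist ((2 : ℝ) • v) a = |2 * ‖v‖ - 1| := by
    have : (2 : ℝ) • v - a = (2 * ‖v‖ - 1) • a := by
      conv_lhs => rw [hva]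
      module
    rw [dist_eq_norm, this, norm_smul, ha, mul_one, Real.norm_eq_abs]
  have dist_add : dist ((2 : ℝ) • v) (-a) = 2 * ‖v‖ + 1 := by
    have : (2 : ℝ) • v - -a = (2 * ‖v‖ + 1) • a := by
      conv_lhs => rw [hva]
      module
    rw [dist_eq_norm, this, norm_smul, ha, mul_one, Real.norm_of_nonneg (by positivity)]
  obtain ⟨u, hu, hdist⟩ := exists_mem_sphere_dist_eq h (t := 1) ((2 : ℝ) • v)
    (a := a) (b := -a) (by simpa using ha) (by simpa using ha)
    (by rw [dist_sub, abs_le]; constructor <;> linarith [norm_nonneg v])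
    (by rw [dist_add]; linarith [norm_nonneg v])
  refine ⟨u, (2 : ℝ) • v - u, by simpa using hu, by rwa [← dist_eq_norm], ?_⟩
  rw [add_sub_cancel, smul_smul]
  norm_num

end NormedSpace

theorem mem_closedBall_eq_mean_coordSphere_general {Γ : Type*} (X : Γ → Type*)
    [∀ γ, NormedAddCommGroup (X γ)] [∀ γ, NormedSpace ℝ (X γ)]
    (hdim : ∀ γ, 2 ≤ Module.rank ℝ (X γ))
    (z : lp X ∞) (hz : z ∈ Metric.closedBall (0 : lp X ∞) 1) :
    ∃ x y : lp X ∞, (∀ γ, ‖x γ‖ = 1) ∧ (∀ γ, ‖y γ‖ = 1) ∧ z = (1 / 2 : ℝ) • (x + y) := by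
  have hzγ (γ : Γ) : ‖z γ‖ ≤ 1 :=
    (lp.norm_apply_le_norm ENNReal.top_ne_zero z γ).trans (mem_closedBall_zero_iff.1 hz)
  choose u w hu hw hzuw using fun γ ↦
    exists_norm_eq_one_eq_half_smul_add ((Cardinal.one_lt_two).trans_le (hdim γ)) (hzγ γ)
  have hu_mem : Memℓp u ∞ := memℓp_infty ⟨1, by rintro - ⟨γ, rfl⟩; exact (hu γ).le⟩
  have hw_mem : Memℓp w ∞ := memℓp_infty ⟨1, by rintro - ⟨γ, rfl⟩; exact (hw γ).le⟩
  exact ⟨⟨u, hu_mem⟩, ⟨w, hw_mem⟩, hu, hw, lp.ext (funext hzuw)⟩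

/-- If `(X γ)` is a family of real Banach spaces of dimension at least 2, then every
element `z` of the closed unit ball of the ℓ∞-sum `lp X ∞` can be written as
`z = (x + y)/2` with `‖x γ‖ = 1 = ‖y γ‖` for every `γ`. -/
theorem mem_closedBall_eq_mean_coordSphere {Γ : Type*} (X : Γ → Type*)
    [∀ γ, NormedAddCommGroup (X γ)] [∀ γ, NormedSpace ℝ (X γ)] [∀ γ, CompleteSpace (X γ)]
    (hdim : ∀ γ, 2 ≤ Module.rank ℝ (X γ))
    (z : lp X ∞) (hz : z ∈ Metric.closedBall (0 : lp X ∞) 1) :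
    ∃ x y : lp X ∞, (∀ γ, ‖x γ‖ = 1) ∧ (∀ γ, ‖y γ‖ = 1) ∧ z = (1 / 2 : ℝ) • (x + y) :=
  mem_closedBall_eq_mean_coordSphere_general X hdim z hz
end

section
/- Let (X_γ)_{γ∈Γ} be a family of nonzero real Banach spaces each of which is strictly convex, and let Z = ⊕_{γ∈Γ}^{ℓ∞} X_γ. Then for every γ_0 ∈ Γ and every x ∈ S_{X_{γ_0}}, the set A(γ_0, x) := { z ∈ S_Z : z(γ_0) = x } is a maximal convex subset of the unit sphere S_Z, i.e., A(γ_0, x) is convex and is not properly contained in any convex subset of S_Z. -/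
/-!
`A(γ₀, x)` is the closed unit ball cut by the affine condition `z γ₀ = x`, hence convex.
For maximality, let `c` lie in a convex `C ⊆ S_Z` containing `A(γ₀, x)`. The point
`z = -c + single γ₀ (c γ₀ + x)` lies in `A(γ₀, x) ⊆ C`, so the midpoint of `c` and `z` has norm
one; but this midpoint vanishes off `γ₀`, where it equals `(c γ₀ + x) / 2`, and strict convexity
of `X γ₀` makes that norm less than one unless `c γ₀ = x`.
-/

open scoped ENNReal

namespace lp

variable {Γ : Type*} {X : Γ → Type*} [∀ γ, NormedAddCommGroup (X γ)]

theorem setOf_mem_sphere_apply_eq {γ₀ : Γ} {x : X γ₀} (hx : ‖x‖ = 1) :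
    {z : lp X ∞ | z ∈ Metric.sphere (0 : lp X ∞) 1 ∧ z γ₀ = x} =
      Metric.closedBall 0 1 ∩ {z | z γ₀ = x} := by
  ext z
  simp only [Set.mem_ofPred_eq, Set.mem_inter_iff, mem_sphere_zero_iff_norm,
    mem_closedBall_zero_iff, and_congr_left_iff]
  rintro rfl
  have : ‖z γ₀‖ ≤ ‖z‖ := norm_apply_le_norm ENNReal.top_ne_zero z γ₀
  constructor <;> intro h <;> linarith

theorem exists_apply_eq_norm_midpoint_eq [∀ γ, NormedSpace ℝ (X γ)] (γ₀ : Γ) {c : lp X ∞}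
    {x : X γ₀} {r : ℝ} (hc : ‖c‖ ≤ r) (hx : ‖x‖ ≤ r) :
    ∃ z : lp X ∞, ‖z‖ ≤ r ∧ z γ₀ = x ∧
      ‖(1 / 2 : ℝ) • c + (1 / 2 : ℝ) • z‖ = ‖(1 / 2 : ℝ) • (c γ₀ + x)‖ := by
  classical
  refine ⟨-c + lp.single ∞ γ₀ (c γ₀ + x), ?_, by simp, ?_⟩
  · refine norm_le_of_forall_le ((norm_nonneg x).trans hx) fun γ => ?_
    rcases eq_or_ne γ γ₀ with rfl | hγ
    · simpa using hx
    · simpa [Pi.single_eq_of_ne hγ] using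
        (norm_apply_le_norm ENNReal.top_ne_zero c γ).trans hc
  · have hmid : (1 / 2 : ℝ) • c + (1 / 2 : ℝ) • (-c + lp.single ∞ γ₀ (c γ₀ + x)) =
        lp.single ∞ γ₀ ((1 / 2 : ℝ) • (c γ₀ + x)) := by
      rw [lp.single_smul]; module
    rw [hmid, lp.norm_single ENNReal.zero_lt_top]

end lp

theorem face_maximal_convex_general {Γ : Type*} (X : Γ → Type*)
    [∀ γ, NormedAddCommGroup (X γ)] [∀ γ, NormedSpace ℝ (X γ)]
    [∀ γ, StrictConvexSpace ℝ (X γ)]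
    (γ₀ : Γ) (x : X γ₀) (hx : ‖x‖ = 1) :
    Convex ℝ {z : lp X ∞ | z ∈ Metric.sphere (0 : lp X ∞) 1 ∧ z γ₀ = x} ∧
    ∀ C : Set (lp X ∞), C ⊆ Metric.sphere (0 : lp X ∞) 1 → Convex ℝ C →
      {z : lp X ∞ | z ∈ Metric.sphere (0 : lp X ∞) 1 ∧ z γ₀ = x} ⊆ C →
      C = {z : lp X ∞ | z ∈ Metric.sphere (0 : lp X ∞) 1 ∧ z γ₀ = x} := by
  rw [lp.setOf_mem_sphere_apply_eq hx]
  refine ⟨(convex_closedBall 0 1).inter ((convex_singleton x).linear_preimage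
    (lp.evalₗ (𝕜 := ℝ) X ∞ γ₀)), fun C hCs hCc hAC => hAC.antisymm' fun c hc => ?_⟩
  have hc1 : ‖c‖ ≤ 1 := mem_closedBall_zero_iff.1 (Metric.sphere_subset_closedBall (hCs hc))
  obtain ⟨z, hz, hzγ₀, hmid⟩ := lp.exists_apply_eq_norm_midpoint_eq γ₀ hc1 hx.le
  have hzC : z ∈ C := hAC ⟨mem_closedBall_zero_iff.2 hz, hzγ₀⟩
  have hmC : (1 / 2 : ℝ) • c + (1 / 2 : ℝ) • z ∈ C :=
    hCc hc hzC (by norm_num) (by norm_num) (by norm_num)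
  have hmid_one : ‖(1 / 2 : ℝ) • (c γ₀ + x)‖ = 1 := hmid ▸ mem_sphere_zero_iff_norm.1 (hCs hmC)
  refine ⟨mem_closedBall_zero_iff.2 hc1, ?_⟩
  by_contra hne
  have hlt : ‖(1 / 2 : ℝ) • c γ₀ + (1 / 2 : ℝ) • x‖ < 1 :=
    norm_combo_lt_of_ne ((lp.norm_apply_le_norm ENNReal.top_ne_zero c γ₀).trans hc1) hx.le hne
      (by norm_num) (by norm_num) (by norm_num)
  rw [← smul_add, hmid_one] at hlt
  exact hlt.false

/-- If `(X γ)` is a family of nonzero strictly convex real Banach spaces and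
`Z = lp X ∞` is their ℓ∞-sum, then for every `γ₀` and every norm-one `x ∈ X γ₀`, the set
`A(γ₀, x) = {z ∈ S_Z : z γ₀ = x}` is a maximal convex subset of the unit sphere of `Z`:
it is convex and coincides with any convex subset of the sphere containing it. -/
theorem face_maximal_convex {Γ : Type*} (X : Γ → Type*)
    [∀ γ, NormedAddCommGroup (X γ)] [∀ γ, NormedSpace ℝ (X γ)] [∀ γ, CompleteSpace (X γ)]
    [∀ γ, Nontrivial (X γ)] [∀ γ, StrictConvexSpace ℝ (X γ)]
    (γ₀ : Γ) (x : X γ₀) (hx : ‖x‖ = 1) :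
    Convex ℝ {z : lp X ∞ | z ∈ Metric.sphere (0 : lp X ∞) 1 ∧ z γ₀ = x} ∧
    ∀ C : Set (lp X ∞), C ⊆ Metric.sphere (0 : lp X ∞) 1 → Convex ℝ C →
      {z : lp X ∞ | z ∈ Metric.sphere (0 : lp X ∞) 1 ∧ z γ₀ = x} ⊆ C →
      C = {z : lp X ∞ | z ∈ Metric.sphere (0 : lp X ∞) 1 ∧ z γ₀ = x} :=
  face_maximal_convex_general X γ₀ x hx
end

section
/- Let (X_γ)_{γ∈Γ} be a family of nonzero real Banach spaces each of which is strictly convex, let Z = ⊕_{γ∈Γ}^{ℓ∞} X_γ, let Y be a real Banach space, and let Δ : S_Z → S_Y be a surjective isometry. Then for every γ_0 ∈ Γ and every x_0 ∈ S_{X_{γ_0}}, the set supp(γ_0, x_0) := { ψ ∈ S_{Y*} : ψ^{-1}({1}) ∩ B_Y = Δ(A(γ_0, x_0)) } is nonempty, is closed in the weak* topology of Y*, and is a face of the closed unit ball B_{Y*} of the dual space Y*. -/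
open scoped ENNReal

/-- Given a surjective isometry `Δ` between unit spheres and a subset `A` of the domain
sphere, `suppSet Δ A` is the set of norm-one functionals `ψ ∈ S_{Y*}` such that
`ψ⁻¹({1}) ∩ B_Y = Δ(A)`. -/
def suppSet {Z Y : Type*} [NormedAddCommGroup Z] [NormedAddCommGroup Y] [NormedSpace ℝ Y]
    (Δ : Metric.sphere (0 : Z) 1 → Metric.sphere (0 : Y) 1)
    (A : Set (Metric.sphere (0 : Z) 1)) : Set (Y →L[ℝ] ℝ) :=
  {ψ | ‖ψ‖ = 1 ∧ ψ ⁻¹' {1} ∩ Metric.closedBall (0 : Y) 1 = (fun z => (Δ z : Y)) '' A}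

/-!
Write `A = A(γ₀, x₀)` and `E = Δ(A)`. Transporting the antipodal map of `S_Y` through `Δ` gives
an isometric involution `β = antipodeConj` of `S_Z` with `‖Δ u + Δ w‖ = ‖u - β w‖` and
`‖z - β z‖ = 2`. Strict convexity of the coordinate spaces forces `(β z)(γ) = -z(γ)` whenever
`‖z(γ)‖ = 1`, and comparing with points all of whose coordinates are unit vectors gives
`‖(β z)(γ)‖ = ‖z(γ)‖` for every `γ`.

From this, any two points of `E` satisfy `‖e + e'‖ = 2`, so the segment between them lies in
`S_Y`; and a unit vector `y` with `‖y + e‖ = 2` for all `e ∈ E` lies in `E`, because its preimage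
is at distance `2` from a point whose only nonzero coordinate is `-x₀`. Approximating points of
`A` by points whose other coordinates have norm `< 1` shows that `E` is convex, and it is closed
as the isometric image of a complete set. Hahn–Banach separation of `E` from the open unit ball
then produces a functional `ψ` with `‖ψ‖ ≤ 1` and `ψ = 1` on `E`, and the maximality of `E`
shows that `supp(γ₀, x₀)` is exactly the set of such functionals, which is visibly weak*-closed,
convex and a face of `B_{Y*}`.
-/

open Function Metric

section UnitBall

variable {E : Type*} [NormedAddCommGroup E] [NormedSpace ℝ E]

theorem eq_neg_of_norm_sub_eq_two [StrictConvexSpace ℝ E] {p q : E} (hp : ‖p‖ ≤ 1)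
    (hq : ‖q‖ ≤ 1) (h : ‖p - q‖ = 2) : p = -q := by
  have hp1 : ‖p‖ = 1 := by linarith [norm_sub_le p q]
  have hq1 : ‖q‖ = 1 := by linarith [norm_sub_le p q]
  refine eq_of_norm_eq_of_norm_add_eq (by rw [norm_neg, hp1, hq1]) ?_
  rw [← sub_eq_add_neg, h, norm_neg, hp1, hq1]
  norm_num

theorem exists_norm_eq_one_sameRay [Nontrivial E] (v : E) :
    ∃ e : E, ‖e‖ = 1 ∧ SameRay ℝ v e := by
  rcases eq_or_ne v 0 with rfl | hv
  · obtain ⟨e, he⟩ := exists_norm_eq E zero_le_one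
    exact ⟨e, he, SameRay.zero_left e⟩
  · exact ⟨‖v‖⁻¹ • v, norm_smul_inv_norm hv,
      SameRay.sameRay_nonneg_smul_right v (inv_nonneg.2 (norm_nonneg v))⟩

theorem norm_smul_add_smul_eq_one_of_norm_add_eq_two {u v : E} (hu : ‖u‖ = 1) (hv : ‖v‖ = 1)
    (huv : ‖u + v‖ = 2) {t : ℝ} (ht₀ : 0 ≤ t) (ht₁ : t ≤ 1) : ‖t • u + (1 - t) • v‖ = 1 := by
  have hball : ∀ s : ℝ, 0 ≤ s → s ≤ 1 → ‖s • u + (1 - s) • v‖ ≤ 1 := fun s hs₀ hs₁ =>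
    mem_closedBall_zero_iff.1 <| convex_closedBall (0 : E) 1
      (mem_closedBall_zero_iff.2 hu.le) (mem_closedBall_zero_iff.2 hv.le) hs₀ (by linarith)
      (by ring)
  have hsplit : u + v = (t • u + (1 - t) • v) + ((1 - t) • u + (1 - (1 - t)) • v) := by module
  have := norm_add_le (t • u + (1 - t) • v) ((1 - t) • u + (1 - (1 - t)) • v)
  rw [← hsplit, huv] at this
  linarith [hball t ht₀ ht₁, hball (1 - t) (by linarith) (by linarith)]

end UnitBall

namespace lp

variable {Γ : Type*} {X : Γ → Type*} [∀ γ, NormedAddCommGroup (X γ)]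

theorem norm_apply_le_one_of_mem_sphere (z : sphere (0 : lp X ∞) 1) (γ : Γ) :
    ‖(z : lp X ∞) γ‖ ≤ 1 :=
  (lp.norm_apply_le_norm ENNReal.top_ne_zero _ γ).trans (norm_eq_of_mem_sphere z).le

theorem apply_eq_neg_of_norm_sub_eq_two [∀ γ, NormedSpace ℝ (X γ)]
    [∀ γ, StrictConvexSpace ℝ (X γ)] {u v : sphere (0 : lp X ∞) 1}
    (huv : ‖(u : lp X ∞) - v‖ = 2) {γ₁ : Γ} {r : ℝ} (hr : r < 2)
    (hoff : ∀ γ ≠ γ₁, ‖(u : lp X ∞) γ - (v : lp X ∞) γ‖ ≤ r) :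
    (u : lp X ∞) γ₁ = -(v : lp X ∞) γ₁ := by
  have hu := norm_apply_le_one_of_mem_sphere u γ₁
  have hv := norm_apply_le_one_of_mem_sphere v γ₁
  have hle : ‖(u : lp X ∞) γ₁ - (v : lp X ∞) γ₁‖ ≤ 2 := by
    linarith [norm_sub_le ((u : lp X ∞) γ₁) ((v : lp X ∞) γ₁)]
  refine eq_neg_of_norm_sub_eq_two hu hv (le_antisymm hle (not_lt.1 fun hlt => ?_))
  have : ‖(u : lp X ∞) - v‖ ≤ max ‖(u : lp X ∞) γ₁ - (v : lp X ∞) γ₁‖ r := by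
    refine lp.norm_le_of_forall_le (le_max_of_le_left (norm_nonneg _)) fun γ => ?_
    rw [lp.coeFn_sub, Pi.sub_apply]
    by_cases hγ : γ = γ₁
    · subst hγ
      exact le_max_left _ _
    · exact (hoff γ hγ).trans (le_max_right _ _)
  linarith [max_lt hlt hr]

def sphereOfCoords (f : ∀ γ, X γ) (hf : ∀ γ, ‖f γ‖ ≤ 1) (γ₁ : Γ) (h₁ : ‖f γ₁‖ = 1) :
    sphere (0 : lp X ∞) 1 :=
  let g : lp X ∞ := ⟨f, memℓp_infty ⟨1, by rintro _ ⟨γ, rfl⟩; exact hf γ⟩⟩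
  ⟨g, mem_sphere_zero_iff_norm.2 <| le_antisymm (lp.norm_le_of_forall_le zero_le_one hf)
    (h₁.symm.le.trans (lp.norm_apply_le_norm ENNReal.top_ne_zero g γ₁))⟩

@[simp]
theorem sphereOfCoords_apply (f : ∀ γ, X γ) (hf : ∀ γ, ‖f γ‖ ≤ 1) (γ₁ : Γ) (h₁ : ‖f γ₁‖ = 1)
    (γ : Γ) : (sphereOfCoords f hf γ₁ h₁ : lp X ∞) γ = f γ :=
  rfl

def singleSphere [DecidableEq Γ] (γ₁ : Γ) (x : X γ₁) (hx : ‖x‖ = 1) : sphere (0 : lp X ∞) 1 :=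
  ⟨lp.single ∞ γ₁ x, by simp [lp.norm_single, hx]⟩

section Shrink

variable [∀ γ, NormedSpace ℝ (X γ)] [DecidableEq Γ]

def shrinkOff (z : sphere (0 : lp X ∞) 1) (γ₁ : Γ) (hz : ‖(z : lp X ∞) γ₁‖ = 1) (δ : ℝ)
    (hδ₀ : 0 ≤ δ) (hδ₁ : δ ≤ 1) : sphere (0 : lp X ∞) 1 :=
  sphereOfCoords (update (fun γ => (1 - δ) • (z : lp X ∞) γ) γ₁ ((z : lp X ∞) γ₁))
    (fun γ => by
      by_cases hγ : γ = γ₁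
      · subst hγ
        simp [hz]
      · rw [update_of_ne hγ, norm_smul, Real.norm_of_nonneg (by linarith)]
        nlinarith [norm_apply_le_one_of_mem_sphere z γ, norm_nonneg ((z : lp X ∞) γ)])
    γ₁ (by simp [hz])

variable (z : sphere (0 : lp X ∞) 1) (γ₁ : Γ) (hz : ‖(z : lp X ∞) γ₁‖ = 1) (δ : ℝ)
  (hδ₀ : 0 ≤ δ) (hδ₁ : δ ≤ 1)

@[simp]
theorem shrinkOff_apply_self : (shrinkOff z γ₁ hz δ hδ₀ hδ₁ : lp X ∞) γ₁ = (z : lp X ∞) γ₁ := by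
  simp [shrinkOff]

theorem norm_shrinkOff_apply_le {γ : Γ} (hγ : γ ≠ γ₁) :
    ‖(shrinkOff z γ₁ hz δ hδ₀ hδ₁ : lp X ∞) γ‖ ≤ 1 - δ := by
  rw [shrinkOff, sphereOfCoords_apply, update_of_ne hγ, norm_smul,
    Real.norm_of_nonneg (by linarith)]
  nlinarith [norm_apply_le_one_of_mem_sphere z γ, norm_nonneg ((z : lp X ∞) γ)]

theorem dist_shrinkOff_le : dist (shrinkOff z γ₁ hz δ hδ₀ hδ₁) z ≤ δ := by
  rw [Subtype.dist_eq, dist_eq_norm]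
  refine lp.norm_le_of_forall_le hδ₀ fun γ => ?_
  rw [lp.coeFn_sub, Pi.sub_apply]
  by_cases hγ : γ = γ₁
  · subst hγ
    simp [hδ₀]
  · rw [shrinkOff, sphereOfCoords_apply, update_of_ne hγ,
      show ∀ x : X γ, (1 - δ) • x - x = (-δ) • x from fun x => by module, norm_smul,
      Real.norm_of_nonpos (by linarith), neg_neg]
    nlinarith [norm_apply_le_one_of_mem_sphere z γ, norm_nonneg ((z : lp X ∞) γ)]

end Shrink

end lp

section AntipodeConj

variable {Z Y : Type*} [NormedAddCommGroup Z] [NormedAddCommGroup Y]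
  {Δ : sphere (0 : Z) 1 → sphere (0 : Y) 1}

noncomputable def antipodeConj (hsurj : Surjective Δ) (z : sphere (0 : Z) 1) :
    sphere (0 : Z) 1 :=
  surjInv hsurj (-Δ z)

theorem apply_antipodeConj (hsurj : Surjective Δ) (z : sphere (0 : Z) 1) :
    Δ (antipodeConj hsurj z) = -Δ z :=
  surjInv_eq hsurj _

variable (hiso : Isometry Δ) (hsurj : Surjective Δ)
include hiso

theorem norm_add_eq_norm_sub_antipodeConj (u w : sphere (0 : Z) 1) :
    ‖(Δ u : Y) + Δ w‖ = ‖(u : Z) - antipodeConj hsurj w‖ := by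
  rw [← dist_eq_norm, ← Subtype.dist_eq, ← hiso.dist_eq, Subtype.dist_eq, dist_eq_norm,
    apply_antipodeConj hsurj, coe_neg_sphere, sub_neg_eq_add]

theorem isometry_antipodeConj : Isometry (antipodeConj hsurj) :=
  Isometry.of_dist_eq fun u w => by
    rw [← hiso.dist_eq, Subtype.dist_eq, apply_antipodeConj hsurj, apply_antipodeConj hsurj,
      coe_neg_sphere,
      coe_neg_sphere, dist_neg_neg, ← Subtype.dist_eq, hiso.dist_eq]

theorem antipodeConj_antipodeConj (z : sphere (0 : Z) 1) :
    antipodeConj hsurj (antipodeConj hsurj z) = z :=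
  hiso.injective (by rw [apply_antipodeConj hsurj, apply_antipodeConj hsurj, neg_neg])

theorem norm_sub_antipodeConj_self [NormedSpace ℝ Y] (z : sphere (0 : Z) 1) :
    ‖(z : Z) - antipodeConj hsurj z‖ = 2 := by
  rw [← norm_add_eq_norm_sub_antipodeConj hiso, ← two_smul ℝ, norm_smul, norm_eq_of_mem_sphere]
  norm_num

end AntipodeConj

section AntipodeConjLp

variable {Γ : Type*} {X : Γ → Type*} [∀ γ, NormedAddCommGroup (X γ)] [∀ γ, NormedSpace ℝ (X γ)]
  [∀ γ, StrictConvexSpace ℝ (X γ)] {Y : Type*} [NormedAddCommGroup Y] [NormedSpace ℝ Y]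
  {Δ : sphere (0 : lp X ∞) 1 → sphere (0 : Y) 1} (hiso : Isometry Δ) (hsurj : Surjective Δ)
include hiso

theorem antipodeConj_apply_of_forall_ne_norm_le (z : sphere (0 : lp X ∞) 1) {γ₁ : Γ} {r : ℝ}
    (hr : r < 1) (hoff : ∀ γ ≠ γ₁, ‖(z : lp X ∞) γ‖ ≤ r) :
    (antipodeConj hsurj z : lp X ∞) γ₁ = -(z : lp X ∞) γ₁ := by
  have h := lp.apply_eq_neg_of_norm_sub_eq_two (norm_sub_antipodeConj_self hiso hsurj z)
    (r := r + 1) (by linarith) fun γ hγ => (norm_sub_le _ _).trans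
      (add_le_add (hoff γ hγ) (lp.norm_apply_le_one_of_mem_sphere _ γ))
  rw [h, neg_neg]

theorem antipodeConj_apply_of_norm_eq_one (z : sphere (0 : lp X ∞) 1) {γ₁ : Γ}
    (h₁ : ‖(z : lp X ∞) γ₁‖ = 1) : (antipodeConj hsurj z : lp X ∞) γ₁ = -(z : lp X ∞) γ₁ := by
  classical
  have key : ∀ δ : ℝ, 0 < δ → δ ≤ 1 →
      ‖(antipodeConj hsurj z : lp X ∞) γ₁ + (z : lp X ∞) γ₁‖ ≤ δ := by
    intro δ hδ₀ hδ₁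
    set z' := lp.shrinkOff z γ₁ h₁ δ hδ₀.le hδ₁
    have hz' : (antipodeConj hsurj z' : lp X ∞) γ₁ = -(z : lp X ∞) γ₁ := by
      rw [antipodeConj_apply_of_forall_ne_norm_le hiso hsurj z' (r := 1 - δ) (by linarith)
        fun γ hγ => lp.norm_shrinkOff_apply_le z γ₁ h₁ δ hδ₀.le hδ₁ hγ, lp.shrinkOff_apply_self]
    calc ‖(antipodeConj hsurj z : lp X ∞) γ₁ + (z : lp X ∞) γ₁‖
        = ‖((antipodeConj hsurj z : lp X ∞) - antipodeConj hsurj z') γ₁‖ := by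
          rw [lp.coeFn_sub, Pi.sub_apply, hz', sub_neg_eq_add]
      _ ≤ ‖(antipodeConj hsurj z : lp X ∞) - antipodeConj hsurj z'‖ :=
          lp.norm_apply_le_norm ENNReal.top_ne_zero _ γ₁
      _ = dist z' z := by
          rw [← dist_eq_norm, ← Subtype.dist_eq, (isometry_antipodeConj hiso hsurj).dist_eq,
            dist_comm]
      _ ≤ δ := lp.dist_shrinkOff_le z γ₁ h₁ δ hδ₀.le hδ₁
  refine eq_of_forall_dist_le fun ε hε => ?_
  rw [dist_eq_norm, sub_neg_eq_add]
  exact (key _ (lt_min hε one_pos) (min_le_right _ _)).trans (min_le_left _ _)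

theorem antipodeConj_eq_neg_of_forall_norm_eq_one (u : sphere (0 : lp X ∞) 1)
    (hu : ∀ γ, ‖(u : lp X ∞) γ‖ = 1) : (antipodeConj hsurj u : lp X ∞) = -u :=
  lp.ext <| funext fun γ => by
    rw [lp.coeFn_neg, Pi.neg_apply, antipodeConj_apply_of_norm_eq_one hiso hsurj u (hu γ)]

theorem norm_antipodeConj_apply_le [∀ γ, Nontrivial (X γ)] (w : sphere (0 : lp X ∞) 1) (γ : Γ) :
    ‖(antipodeConj hsurj w : lp X ∞) γ‖ ≤ ‖(w : lp X ∞) γ‖ := by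
  classical
  -- A point `u` with unit coordinates, pointing along `β w` at `γ` and along `w` elsewhere;
  -- then `β u = -u`, so `‖(β w)(γ)‖ + 1 ≤ ‖β w - β u‖ = ‖w - u‖ ≤ 1 + ‖w(γ)‖`.
  choose e he using fun γ' => exists_norm_eq_one_sameRay ((w : lp X ∞) γ')
  obtain ⟨e₀, he₀, hray⟩ := exists_norm_eq_one_sameRay ((antipodeConj hsurj w : lp X ∞) γ)
  set f : ∀ γ', X γ' := update e γ e₀
  have hf : ∀ γ', ‖f γ'‖ = 1 := fun γ' => by
    by_cases hγ : γ' = γ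
    · subst hγ
      simpa [f] using he₀
    · simpa [f, hγ] using (he γ').1
  set u := lp.sphereOfCoords f (fun γ' => (hf γ').le) γ (hf γ)
  have hdist : ‖(w : lp X ∞) - u‖ ≤ 1 + ‖(w : lp X ∞) γ‖ := by
    refine lp.norm_le_of_forall_le (by positivity) fun γ' => ?_
    rw [lp.coeFn_sub, Pi.sub_apply, lp.sphereOfCoords_apply]
    by_cases hγ : γ' = γ
    · subst hγ
      simpa [f, he₀, add_comm] using norm_sub_le ((w : lp X ∞) γ') e₀
    · rw [show f γ' = e γ' from update_of_ne hγ _ _, (he γ').2.norm_sub, (he γ').1]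
      have := lp.norm_apply_le_one_of_mem_sphere w γ'
      rw [abs_le]
      constructor <;> linarith [norm_nonneg ((w : lp X ∞) γ'), norm_nonneg ((w : lp X ∞) γ)]
  have : ‖(antipodeConj hsurj w : lp X ∞) γ‖ + 1 ≤ 1 + ‖(w : lp X ∞) γ‖ :=
    calc ‖(antipodeConj hsurj w : lp X ∞) γ‖ + 1
        = ‖((antipodeConj hsurj w : lp X ∞) - antipodeConj hsurj u) γ‖ := by
          rw [antipodeConj_eq_neg_of_forall_norm_eq_one hiso hsurj u hf, sub_neg_eq_add,
            lp.coeFn_add, Pi.add_apply, lp.sphereOfCoords_apply,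
            show f γ = e₀ from update_self _ _ _, hray.norm_add, he₀]
      _ ≤ ‖(antipodeConj hsurj w : lp X ∞) - antipodeConj hsurj u‖ :=
          lp.norm_apply_le_norm ENNReal.top_ne_zero _ γ
      _ = ‖(w : lp X ∞) - u‖ := by
          rw [← dist_eq_norm, ← Subtype.dist_eq, (isometry_antipodeConj hiso hsurj).dist_eq,
            Subtype.dist_eq, dist_eq_norm]
      _ ≤ 1 + ‖(w : lp X ∞) γ‖ := hdist
  linarith

theorem norm_antipodeConj_apply [∀ γ, Nontrivial (X γ)] (z : sphere (0 : lp X ∞) 1) (γ : Γ) :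
    ‖(antipodeConj hsurj z : lp X ∞) γ‖ = ‖(z : lp X ∞) γ‖ := by
  refine le_antisymm (norm_antipodeConj_apply_le hiso hsurj z γ) ?_
  simpa only [antipodeConj_antipodeConj hiso hsurj] using
    norm_antipodeConj_apply_le hiso hsurj (antipodeConj hsurj z) γ

end AntipodeConjLp

section SupportingFunctionals

variable {Y : Type*} [NormedAddCommGroup Y] [NormedSpace ℝ Y]

def supportingFunctionals (S : Set Y) : Set (Y →L[ℝ] ℝ) :=
  {ψ | ‖ψ‖ ≤ 1 ∧ ∀ y ∈ S, ψ y = 1}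

theorem apply_le_norm_of_norm_le_one {ψ : Y →L[ℝ] ℝ} (hψ : ‖ψ‖ ≤ 1) (y : Y) : ψ y ≤ ‖y‖ :=
  (Real.le_norm_self _).trans ((ψ.le_of_opNorm_le hψ y).trans_eq (one_mul _))

theorem isClosed_toWeakDual_image_supportingFunctionals (S : Set Y) :
    IsClosed (StrongDual.toWeakDual '' supportingFunctionals S) := by
  have : StrongDual.toWeakDual '' supportingFunctionals S =
      WeakDual.toStrongDual ⁻¹' closedBall 0 1 ∩ ⋂ y ∈ S, {φ : WeakDual ℝ Y | φ y = 1} := by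
    ext φ
    simp [LinearEquiv.image_eq_preimage_symm, supportingFunctionals]
  rw [this]
  exact (WeakDual.isClosed_closedBall 0 1).inter
    (isClosed_biInter fun y _ => isClosed_singleton.preimage (WeakDual.eval_continuous y))

theorem convex_supportingFunctionals (S : Set Y) : Convex ℝ (supportingFunctionals S) := by
  intro ψ₁ h₁ ψ₂ h₂ a b ha hb hab
  refine ⟨mem_closedBall_zero_iff.1 <| convex_closedBall (0 : Y →L[ℝ] ℝ) 1
    (mem_closedBall_zero_iff.2 h₁.1) (mem_closedBall_zero_iff.2 h₂.1) ha hb hab, fun y hy => ?_⟩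
  simp [h₁.2 y hy, h₂.2 y hy, hab]

theorem isExtreme_supportingFunctionals {S : Set Y} (hS : ∀ y ∈ S, ‖y‖ ≤ 1) :
    IsExtreme ℝ (closedBall 0 1) (supportingFunctionals S) := by
  refine ⟨fun ψ hψ => mem_closedBall_zero_iff.2 hψ.1, ?_⟩
  rintro ψ₁ h₁ ψ₂ h₂ ψ hψ ⟨a, b, ha, hb, hab, rfl⟩
  rw [mem_closedBall_zero_iff] at h₁ h₂
  refine ⟨h₁, fun y hy => ?_⟩
  have hsum : a * ψ₁ y + b * ψ₂ y = 1 := by simpa using hψ.2 y hy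
  have hle₁ := (apply_le_norm_of_norm_le_one h₁ y).trans (hS y hy)
  have hle₂ := (apply_le_norm_of_norm_le_one h₂ y).trans (hS y hy)
  nlinarith

theorem supportingFunctionals_nonempty {E : Set Y} (hE : Convex ℝ E)
    (hE₁ : ∀ y ∈ E, ‖y‖ = 1) : (supportingFunctionals E).Nonempty := by
  have hdisj : Disjoint (ball (0 : Y) 1) E := Set.disjoint_left.2 fun y hy hyE => by
    rw [mem_ball_zero_iff, hE₁ y hyE] at hy
    exact lt_irrefl _ hy
  obtain ⟨f, u, hf, hfE⟩ := geometric_hahn_banach_open (convex_ball 0 1) isOpen_ball hE hdisj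
  have hu : 0 < u := by simpa using hf 0 (mem_ball_self one_pos)
  have hfB : ∀ y ∈ closedBall (0 : Y) 1, f y ≤ u := by
    rw [← closure_ball 0 one_ne_zero]
    exact closure_minimal (fun y hy => (hf y hy).le) (isClosed_le f.continuous continuous_const)
  have hfnorm : ‖f‖ ≤ u := f.opNorm_le_of_unit_norm hu.le fun y hy => by
    have hpos := hfB y (by simp [hy])
    have hneg := hfB (-y) (by simp [hy])
    rw [map_neg] at hneg
    exact abs_le.2 ⟨by linarith, hpos⟩
  refine ⟨u⁻¹ • f, ?_, fun y hy => ?_⟩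
  · rw [norm_smul, Real.norm_of_nonneg (inv_nonneg.2 hu.le)]
    exact (mul_le_mul_of_nonneg_left hfnorm (inv_nonneg.2 hu.le)).trans_eq (inv_mul_cancel₀ hu.ne')
  · have : f y = u := le_antisymm (hfB y (by simp [hE₁ y hy])) (hfE y hy)
    simp [this, hu.ne']

theorem suppSet_eq_supportingFunctionals {Z : Type*} [NormedAddCommGroup Z]
    {Δ : sphere (0 : Z) 1 → sphere (0 : Y) 1} {A : Set (sphere (0 : Z) 1)} (hA : A.Nonempty)
    (hmax : ∀ y : Y, ‖y‖ = 1 → (∀ a ∈ A, ‖y + Δ a‖ = 2) → y ∈ (fun z => (Δ z : Y)) '' A) :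
    suppSet Δ A = supportingFunctionals ((fun z => (Δ z : Y)) '' A) := by
  have hΔ : ∀ z, ‖(Δ z : Y)‖ = 1 := fun z => norm_eq_of_mem_sphere (Δ z)
  ext ψ
  constructor
  · rintro ⟨hψ, hψE⟩
    refine ⟨hψ.le, fun y hy => ?_⟩
    rw [← hψE] at hy
    exact hy.1
  · rintro ⟨hψ, hψE⟩
    obtain ⟨a, ha⟩ := hA
    refine ⟨le_antisymm hψ ?_, Set.Subset.antisymm ?_ ?_⟩
    · calc 1 = ψ (Δ a) := (hψE _ ⟨a, ha, rfl⟩).symm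
        _ ≤ ‖ψ‖ * ‖(Δ a : Y)‖ := (Real.le_norm_self _).trans (ψ.le_opNorm _)
        _ = ‖ψ‖ := by rw [hΔ, mul_one]
    · rintro y ⟨hy1, hyB⟩
      have hy1 : ψ y = 1 := hy1
      rw [mem_closedBall_zero_iff] at hyB
      have hyn : ‖y‖ = 1 := le_antisymm hyB (hy1 ▸ apply_le_norm_of_norm_le_one hψ y)
      refine hmax y hyn fun a ha => le_antisymm ?_ ?_
      · linarith [norm_add_le y (Δ a : Y), hΔ a]
      · calc (2 : ℝ) = ψ (y + Δ a) := by rw [map_add, hy1, hψE _ ⟨a, ha, rfl⟩]; norm_num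
          _ ≤ ‖y + Δ a‖ := apply_le_norm_of_norm_le_one hψ _
    · rintro _ ⟨a, ha, rfl⟩
      exact ⟨hψE _ ⟨a, ha, rfl⟩, mem_closedBall_zero_iff.2 (hΔ a).le⟩

end SupportingFunctionals

section Fiber

variable {Γ : Type*} {X : Γ → Type*} [∀ γ, NormedAddCommGroup (X γ)]

def sphereFiber (γ₀ : Γ) (x₀ : X γ₀) : Set (sphere (0 : lp X ∞) 1) :=
  {z | (z : lp X ∞) γ₀ = x₀}

theorem mem_sphereFiber {γ₀ : Γ} {x₀ : X γ₀} {z : sphere (0 : lp X ∞) 1} :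
    z ∈ sphereFiber γ₀ x₀ ↔ (z : lp X ∞) γ₀ = x₀ :=
  Iff.rfl

theorem sphereFiber_nonempty {γ₀ : Γ} {x₀ : X γ₀} (hx₀ : ‖x₀‖ = 1) :
    (sphereFiber γ₀ x₀).Nonempty := by
  classical
  exact ⟨lp.singleSphere γ₀ x₀ hx₀, lp.single_apply_self ∞ γ₀ x₀⟩

theorem isClosed_sphereFiber (γ₀ : Γ) (x₀ : X γ₀) : IsClosed (sphereFiber γ₀ x₀) :=
  isClosed_singleton.preimage <|
    (lp.lipschitzWith_one_eval ∞ γ₀).continuous.comp continuous_subtype_val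

theorem isClosed_image_sphereFiber [∀ γ, CompleteSpace (X γ)] {Y : Type*} [NormedAddCommGroup Y]
    {Δ : sphere (0 : lp X ∞) 1 → sphere (0 : Y) 1} (hiso : Isometry Δ) (γ₀ : Γ) (x₀ : X γ₀) :
    IsClosed ((fun z => (Δ z : Y)) '' sphereFiber γ₀ x₀) := by
  have : CompleteSpace (sphere (0 : lp X ∞) 1) := isClosed_sphere.completeSpace_coe
  exact ((isComplete_image_iff (isometry_subtype_coe.comp hiso).isUniformInducing).2
    (isClosed_sphereFiber γ₀ x₀).isComplete).isClosed

variable [∀ γ, NormedSpace ℝ (X γ)] [∀ γ, StrictConvexSpace ℝ (X γ)] {Y : Type*}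
  [NormedAddCommGroup Y] [NormedSpace ℝ Y] {Δ : sphere (0 : lp X ∞) 1 → sphere (0 : Y) 1}
  (hiso : Isometry Δ) (hsurj : Surjective Δ) {γ₀ : Γ} {x₀ : X γ₀} (hx₀ : ‖x₀‖ = 1)
include hiso hsurj hx₀

theorem antipodeConj_apply_of_mem_sphereFiber {a : sphere (0 : lp X ∞) 1}
    (ha : a ∈ sphereFiber γ₀ x₀) : (antipodeConj hsurj a : lp X ∞) γ₀ = -x₀ := by
  rw [mem_sphereFiber] at ha
  rw [antipodeConj_apply_of_norm_eq_one hiso hsurj a (ha ▸ hx₀), ha]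

theorem norm_add_eq_two_of_mem_sphereFiber {a a' : sphere (0 : lp X ∞) 1}
    (ha : a ∈ sphereFiber γ₀ x₀) (ha' : a' ∈ sphereFiber γ₀ x₀) : ‖(Δ a : Y) + Δ a'‖ = 2 := by
  rw [norm_add_eq_norm_sub_antipodeConj hiso hsurj]
  refine le_antisymm ?_ ?_
  · linarith [norm_sub_le (a : lp X ∞) (antipodeConj hsurj a'), norm_eq_of_mem_sphere a,
      norm_eq_of_mem_sphere (antipodeConj hsurj a')]
  · calc (2 : ℝ) = ‖((a : lp X ∞) - antipodeConj hsurj a') γ₀‖ := by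
          rw [lp.coeFn_sub, Pi.sub_apply, mem_sphereFiber.1 ha,
            antipodeConj_apply_of_mem_sphereFiber hiso hsurj hx₀ ha', sub_neg_eq_add, ← two_smul ℝ,
            norm_smul, hx₀]
          norm_num
      _ ≤ ‖(a : lp X ∞) - antipodeConj hsurj a'‖ := lp.norm_apply_le_norm ENNReal.top_ne_zero _ γ₀

theorem mem_image_sphereFiber_of_forall_norm_add_eq_two (y : Y) (hy : ‖y‖ = 1)
    (hall : ∀ a ∈ sphereFiber γ₀ x₀, ‖y + Δ a‖ = 2) :
    y ∈ (fun z => (Δ z : Y)) '' sphereFiber γ₀ x₀ := by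
  classical
  obtain ⟨z, hz⟩ := hsurj ⟨y, mem_sphere_zero_iff_norm.2 hy⟩
  -- The only nonzero coordinate of `w` is `-x₀`, so `‖z - w‖ = 2` can only be attained at `γ₀`.
  set w := lp.singleSphere γ₀ (-x₀) (by rw [norm_neg, hx₀])
  have hw : (w : lp X ∞) γ₀ = -x₀ := lp.single_apply_self ∞ γ₀ (-x₀)
  have hβw : antipodeConj hsurj w ∈ sphereFiber γ₀ x₀ := by
    rw [mem_sphereFiber, antipodeConj_apply_of_norm_eq_one hiso hsurj w (by rw [hw, norm_neg, hx₀]),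
      hw, neg_neg]
  have hzw : ‖(z : lp X ∞) - w‖ = 2 := by
    rw [← antipodeConj_antipodeConj hiso hsurj w, ← norm_add_eq_norm_sub_antipodeConj hiso hsurj,
      hz]
    exact hall _ hβw
  have hzγ₀ := lp.apply_eq_neg_of_norm_sub_eq_two hzw one_lt_two fun γ hγ => by
    rw [show (w : lp X ∞) γ = 0 from lp.single_apply_ne ∞ γ₀ (-x₀) hγ, sub_zero]
    exact lp.norm_apply_le_one_of_mem_sphere z γ
  exact ⟨z, by rw [mem_sphereFiber, hzγ₀, hw, neg_neg], congrArg Subtype.val hz⟩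

theorem smul_add_smul_mem_image_sphereFiber [∀ γ, Nontrivial (X γ)]
    {a a' : sphere (0 : lp X ∞) 1} (ha : a ∈ sphereFiber γ₀ x₀) (ha' : a' ∈ sphereFiber γ₀ x₀)
    {r : ℝ} (hr : r < 1) (hoff : ∀ γ ≠ γ₀, ‖(a : lp X ∞) γ‖ ≤ r) {s : ℝ} (hs₀ : 0 ≤ s)
    (hs₁ : s ≤ 1) :
    s • (Δ a : Y) + (1 - s) • (Δ a' : Y) ∈ (fun z => (Δ z : Y)) '' sphereFiber γ₀ x₀ := by
  have hΔ : ∀ z, ‖(Δ z : Y)‖ = 1 := fun z => norm_eq_of_mem_sphere (Δ z)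
  have hsum := norm_add_eq_two_of_mem_sphereFiber hiso hsurj hx₀ ha ha'
  have hy := norm_smul_add_smul_eq_one_of_norm_add_eq_two (hΔ a) (hΔ a') hsum hs₀ hs₁
  obtain ⟨z, hz⟩ := hsurj ⟨_, mem_sphere_zero_iff_norm.2 hy⟩
  have hza : ‖(z : lp X ∞) - antipodeConj hsurj a‖ = 2 := by
    rw [← norm_add_eq_norm_sub_antipodeConj hiso hsurj, hz,
      show s • (Δ a : Y) + (1 - s) • (Δ a' : Y) + Δ a
        = (2 : ℝ) • (((1 + s) / 2) • (Δ a : Y) + (1 - (1 + s) / 2) • (Δ a' : Y)) by module,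
      norm_smul, norm_smul_add_smul_eq_one_of_norm_add_eq_two (hΔ a) (hΔ a') hsum
        (by linarith) (by linarith)]
    norm_num
  have hzγ₀ := lp.apply_eq_neg_of_norm_sub_eq_two hza (r := 1 + r) (by linarith) fun γ hγ =>
    (norm_sub_le _ _).trans (add_le_add (lp.norm_apply_le_one_of_mem_sphere z γ)
      ((norm_antipodeConj_apply hiso hsurj a γ).trans_le (hoff γ hγ)))
  exact ⟨z, by rw [mem_sphereFiber, hzγ₀, antipodeConj_apply_of_mem_sphereFiber hiso hsurj hx₀ ha,
    neg_neg], congrArg Subtype.val hz⟩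

theorem convex_image_sphereFiber [∀ γ, CompleteSpace (X γ)] [∀ γ, Nontrivial (X γ)] :
    Convex ℝ ((fun z => (Δ z : Y)) '' sphereFiber γ₀ x₀) := by
  classical
  rintro _ ⟨a, ha, rfl⟩ _ ⟨a', ha', rfl⟩ s t hs ht hst
  obtain rfl : t = 1 - s := by linarith
  rw [← (isClosed_image_sphereFiber hiso γ₀ x₀).closure_eq, Metric.mem_closure_iff]
  intro ε hε
  set δ := min (ε / 2) 1
  have hδ₀ : 0 < δ := lt_min (by linarith) one_pos
  have hδ₁ : δ ≤ 1 := min_le_right _ _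
  have ha₁ : ‖(a : lp X ∞) γ₀‖ = 1 := by rw [mem_sphereFiber.1 ha, hx₀]
  -- Move `a` within `δ` to a point of the fiber whose other coordinates have norm `≤ 1 - δ`.
  set aδ := lp.shrinkOff a γ₀ ha₁ δ hδ₀.le hδ₁
  have haδ : aδ ∈ sphereFiber γ₀ x₀ := (lp.shrinkOff_apply_self a γ₀ ha₁ δ _ _).trans ha
  refine ⟨_, smul_add_smul_mem_image_sphereFiber hiso hsurj hx₀ haδ ha' (r := 1 - δ)
    (by linarith) (fun γ hγ => lp.norm_shrinkOff_apply_le a γ₀ ha₁ δ _ _ hγ) hs (by linarith), ?_⟩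
  calc dist (s • (Δ a : Y) + (1 - s) • (Δ a' : Y)) (s • (Δ aδ : Y) + (1 - s) • (Δ a' : Y))
      = s * dist (Δ aδ) (Δ a) := by
        rw [dist_add_right, dist_smul₀, Real.norm_of_nonneg hs, ← Subtype.dist_eq, dist_comm]
    _ ≤ 1 * δ := by
        rw [hiso.dist_eq]
        exact mul_le_mul (by linarith) (lp.dist_shrinkOff_le a γ₀ ha₁ δ _ _) dist_nonneg
          zero_le_one
    _ < ε := by linarith [min_le_left (ε / 2) 1]

end Fiber

theorem suppSet_nonempty_weakStarClosed_face_general {Γ : Type*} (X : Γ → Type*)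
    [∀ γ, NormedAddCommGroup (X γ)] [∀ γ, NormedSpace ℝ (X γ)] [∀ γ, CompleteSpace (X γ)]
    [∀ γ, Nontrivial (X γ)] [∀ γ, StrictConvexSpace ℝ (X γ)]
    (Y : Type*) [NormedAddCommGroup Y] [NormedSpace ℝ Y]
    (Δ : Metric.sphere (0 : lp X ∞) 1 → Metric.sphere (0 : Y) 1)
    (hiso : Isometry Δ) (hsurj : Function.Surjective Δ)
    (γ₀ : Γ) (x₀ : X γ₀) (hx₀ : ‖x₀‖ = 1) :
    (suppSet Δ {z : Metric.sphere (0 : lp X ∞) 1 | (z : lp X ∞) γ₀ = x₀}).Nonempty ∧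
    IsClosed ((StrongDual.toWeakDual (𝕜 := ℝ) (E := Y)) ''
      suppSet Δ {z : Metric.sphere (0 : lp X ∞) 1 | (z : lp X ∞) γ₀ = x₀}) ∧
    Convex ℝ (suppSet Δ {z : Metric.sphere (0 : lp X ∞) 1 | (z : lp X ∞) γ₀ = x₀}) ∧
    IsExtreme ℝ (Metric.closedBall (0 : Y →L[ℝ] ℝ) 1)
      (suppSet Δ {z : Metric.sphere (0 : lp X ∞) 1 | (z : lp X ∞) γ₀ = x₀}) := by
  have hsupp : suppSet Δ {z : Metric.sphere (0 : lp X ∞) 1 | (z : lp X ∞) γ₀ = x₀} =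
      supportingFunctionals ((fun z => (Δ z : Y)) '' sphereFiber γ₀ x₀) :=
    suppSet_eq_supportingFunctionals (sphereFiber_nonempty hx₀)
      (mem_image_sphereFiber_of_forall_norm_add_eq_two hiso hsurj hx₀)
  have hE₁ : ∀ y ∈ (fun z => (Δ z : Y)) '' sphereFiber γ₀ x₀, ‖y‖ = 1 := by
    rintro _ ⟨z, -, rfl⟩
    exact norm_eq_of_mem_sphere (Δ z)
  rw [hsupp]
  exact ⟨supportingFunctionals_nonempty (convex_image_sphereFiber hiso hsurj hx₀) hE₁,
    isClosed_toWeakDual_image_supportingFunctionals _, convex_supportingFunctionals _,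
    isExtreme_supportingFunctionals fun y hy => (hE₁ y hy).le⟩

/-- Let `(X γ)` be a family of nonzero strictly convex real Banach spaces, `Z = lp X ∞`
their ℓ∞-sum, `Y` a real Banach space and `Δ : S_Z → S_Y` a surjective isometry.  Then for
every `γ₀` and every norm-one `x₀ ∈ X γ₀`, the set
`supp(γ₀, x₀) = {ψ ∈ S_{Y*} : ψ⁻¹({1}) ∩ B_Y = Δ(A(γ₀, x₀))}` is nonempty, is weak*-closed
in `Y*`, and is a face (a nonempty convex extreme subset) of the closed unit ball of `Y*`. -/
theorem suppSet_nonempty_weakStarClosed_face {Γ : Type*} (X : Γ → Type*)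
    [∀ γ, NormedAddCommGroup (X γ)] [∀ γ, NormedSpace ℝ (X γ)] [∀ γ, CompleteSpace (X γ)]
    [∀ γ, Nontrivial (X γ)] [∀ γ, StrictConvexSpace ℝ (X γ)]
    (Y : Type*) [NormedAddCommGroup Y] [NormedSpace ℝ Y] [CompleteSpace Y]
    (Δ : Metric.sphere (0 : lp X ∞) 1 → Metric.sphere (0 : Y) 1)
    (hiso : Isometry Δ) (hsurj : Function.Surjective Δ)
    (γ₀ : Γ) (x₀ : X γ₀) (hx₀ : ‖x₀‖ = 1) :
    (suppSet Δ {z : Metric.sphere (0 : lp X ∞) 1 | (z : lp X ∞) γ₀ = x₀}).Nonempty ∧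
    IsClosed ((StrongDual.toWeakDual (𝕜 := ℝ) (E := Y)) ''
      suppSet Δ {z : Metric.sphere (0 : lp X ∞) 1 | (z : lp X ∞) γ₀ = x₀}) ∧
    Convex ℝ (suppSet Δ {z : Metric.sphere (0 : lp X ∞) 1 | (z : lp X ∞) γ₀ = x₀}) ∧
    IsExtreme ℝ (Metric.closedBall (0 : Y →L[ℝ] ℝ) 1)
      (suppSet Δ {z : Metric.sphere (0 : lp X ∞) 1 | (z : lp X ∞) γ₀ = x₀}) :=
  suppSet_nonempty_weakStarClosed_face_general X Y Δ hiso hsurj γ₀ x₀ hx₀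
end

section
/- Let X be a real strictly convex Banach space and let K be a locally compact Hausdorff space. Then for every t_0 ∈ K and every x_0 ∈ S_X, the set A(t_0, x_0) := { f ∈ S_{C_0(K,X)} : f(t_0) = x_0 } is a maximal convex subset of the unit sphere of C_0(K, X), i.e., A(t_0, x_0) is convex and is not properly contained in any convex subset of S_{C_0(K,X)}. -/
/-!
On the sphere, `f t₀ = x₀` with `‖x₀‖ = 1` already forces `‖f‖ = 1`, so `A(t₀, x₀)` is the
intersection of the closed unit ball with an affine subspace, hence convex. For maximality, let
`g` be a norm-one function with `g t₀ ≠ x₀`. By strict convexity `m = midpoint x₀ (g ·)` has norm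
`< r < 1` on a neighbourhood `U` of `t₀`; with an Urysohn cutoff `h = φ • m` supported in `U`,
`f = 2 • h - g` lies in `A(t₀, x₀)` while `midpoint f g = h` has norm `≤ r < 1`. So no convex
subset of the sphere contains both `A(t₀, x₀)` and `g`.
-/

open scoped ZeroAtInfty
open Set Metric

theorem norm_midpoint_lt_one_of_ne {E : Type*} [NormedAddCommGroup E] [NormedSpace ℝ E]
    [StrictConvexSpace ℝ E] {x y : E} (hx : ‖x‖ ≤ 1) (hy : ‖y‖ ≤ 1) (hne : x ≠ y) :
    ‖midpoint ℝ x y‖ < 1 := by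
  simp only [← mem_closedBall_zero_iff, ← mem_ball_zero_iff] at hx hy ⊢
  exact openSegment_subset_ball_of_ne hx hy hne (midpoint_mem_openSegment x y)

namespace ZeroAtInftyContinuousMap

variable {K X : Type*} [TopologicalSpace K] [NormedAddCommGroup X]

theorem norm_apply_le (f : C₀(K, X)) (t : K) : ‖f t‖ ≤ ‖f‖ := by
  rw [← norm_toBCF_eq_norm]
  exact f.toBCF.norm_coe_le_norm t

theorem norm_le (f : C₀(K, X)) {C : ℝ} (hC : 0 ≤ C) : ‖f‖ ≤ C ↔ ∀ t, ‖f t‖ ≤ C := by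
  rw [← norm_toBCF_eq_norm]
  exact BoundedContinuousFunction.norm_le hC

theorem setOf_mem_sphere_and_apply_eq (t₀ : K) {x₀ : X} (hx₀ : ‖x₀‖ = 1) :
    {f : C₀(K, X) | f ∈ sphere 0 1 ∧ f t₀ = x₀} = closedBall 0 1 ∩ {f | f t₀ = x₀} := by
  ext f
  simp only [mem_ofPred_eq, mem_inter_iff, mem_sphere_zero_iff_norm, mem_closedBall_zero_iff]
  refine ⟨fun h => ⟨h.1.le, h.2⟩, fun ⟨hf, hft⟩ => ⟨hf.antisymm ?_, hft⟩⟩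
  simpa [hft, hx₀] using f.norm_apply_le t₀

variable [NormedSpace ℝ X]

theorem convex_setOf_mem_sphere_and_apply_eq (t₀ : K) {x₀ : X} (hx₀ : ‖x₀‖ = 1) :
    Convex ℝ {f : C₀(K, X) | f ∈ sphere 0 1 ∧ f t₀ = x₀} := by
  rw [setOf_mem_sphere_and_apply_eq t₀ hx₀]
  refine (convex_closedBall 0 1).inter ?_
  intro f hf g hg a b _ _ hab
  simp_all [← add_smul]

theorem exists_cutoff_smul [LocallyCompactSpace K] [RegularSpace K] (v : C(K, X)) {t₀ : K} {U : Set K}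
    (hU : IsOpen U) (ht₀ : t₀ ∈ U) :
    ∃ h : C₀(K, X), h t₀ = v t₀ ∧
      ∀ t, ∃ c ∈ Icc (0 : ℝ) 1, h t = c • v t ∧ (t ∉ U → c = 0) := by
  obtain ⟨φ, hφ₁, hφ₀, hφc, hφ⟩ := exists_continuous_one_zero_of_isCompact isCompact_singleton
    hU.isClosed_compl (disjoint_compl_right_iff_subset.mpr (singleton_subset_iff.mpr ht₀))
  refine ⟨⟨φ • v, hφc.smul_right.is_zero_at_infty⟩, ?_, fun t => ⟨φ t, hφ t, rfl, fun ht => hφ₀ ht⟩⟩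
  show φ t₀ • v t₀ = v t₀
  rw [show φ t₀ = 1 from hφ₁ rfl, one_smul]

theorem exists_apply_eq_norm_midpoint_lt_one [LocallyCompactSpace K] [RegularSpace K]
    [StrictConvexSpace ℝ X] {t₀ : K} {x₀ : X} (hx₀ : ‖x₀‖ ≤ 1) {g : C₀(K, X)} (hg : ‖g‖ ≤ 1)
    (hne : g t₀ ≠ x₀) : ∃ f : C₀(K, X), ‖f‖ ≤ 1 ∧ f t₀ = x₀ ∧ ‖midpoint ℝ f g‖ < 1 := by
  have hg' (t : K) : ‖g t‖ ≤ 1 := (g.norm_apply_le t).trans hg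
  let m : C(K, X) := ⟨fun t => midpoint ℝ x₀ (g t), by
    simp only [midpoint_eq_smul_add]; fun_prop⟩
  have hm : ‖m t₀‖ < 1 := norm_midpoint_lt_one_of_ne hx₀ (hg' t₀) hne.symm
  obtain ⟨r, hmr, hr⟩ := exists_between hm
  have hr₀ : 0 ≤ r := (norm_nonneg _).trans hmr.le
  obtain ⟨h, hh₀, hh⟩ :=
    exists_cutoff_smul m (isOpen_lt (by fun_prop) continuous_const : IsOpen {t | ‖m t‖ < r}) hmr
  refine ⟨(2 : ℝ) • h - g, ?_, ?_, ?_⟩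
  · refine (norm_le _ zero_le_one).2 fun t => ?_
    obtain ⟨c, hc, hht, -⟩ := hh t
    have hft : ((2 : ℝ) • h - g) t = c • x₀ + (1 - c) • (-g t) := by
      simp only [coe_sub, coe_smul, Pi.sub_apply, Pi.smul_apply, hht, m, ContinuousMap.coe_mk,
        midpoint_eq_smul_add, invOf_eq_inv]
      module
    rw [hft, ← mem_closedBall_zero_iff]
    exact convex_closedBall 0 1 (mem_closedBall_zero_iff.2 hx₀)
      (mem_closedBall_zero_iff.2 ((norm_neg _).trans_le (hg' t))) hc.1 (sub_nonneg.2 hc.2)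
      (add_sub_cancel _ _)
  · simp only [coe_sub, coe_smul, Pi.sub_apply, Pi.smul_apply, hh₀, m, ContinuousMap.coe_mk,
      midpoint_eq_smul_add, invOf_eq_inv]
    module
  · have hmid : midpoint ℝ ((2 : ℝ) • h - g) g = h := by
      rw [midpoint_eq_smul_add, invOf_eq_inv]
      module
    rw [hmid]
    refine ((norm_le h hr₀).2 fun t => ?_).trans_lt hr
    obtain ⟨c, hc, hht, hcU⟩ := hh t
    rw [hht, norm_smul, Real.norm_of_nonneg hc.1]
    by_cases ht : ‖m t‖ < r
    · nlinarith [hc.2, norm_nonneg (m t)]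
    · simp [hcU ht, hr₀]

end ZeroAtInftyContinuousMap

open ZeroAtInftyContinuousMap in
theorem czero_face_maximal_convex_general (X : Type*) [NormedAddCommGroup X] [NormedSpace ℝ X]
    [StrictConvexSpace ℝ X]
    (K : Type*) [TopologicalSpace K] [LocallyCompactSpace K] [T2Space K]
    (t₀ : K) (x₀ : X) (hx₀ : ‖x₀‖ = 1) :
    Convex ℝ {f : C₀(K, X) | f ∈ Metric.sphere (0 : C₀(K, X)) 1 ∧ f t₀ = x₀} ∧
    ∀ C : Set C₀(K, X), C ⊆ Metric.sphere (0 : C₀(K, X)) 1 → Convex ℝ C →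
      {f : C₀(K, X) | f ∈ Metric.sphere (0 : C₀(K, X)) 1 ∧ f t₀ = x₀} ⊆ C →
      C = {f : C₀(K, X) | f ∈ Metric.sphere (0 : C₀(K, X)) 1 ∧ f t₀ = x₀} := by
  refine ⟨convex_setOf_mem_sphere_and_apply_eq t₀ hx₀, fun C hCS hC hAC => hAC.antisymm' ?_⟩
  intro g hgC
  have hg : ‖g‖ = 1 := mem_sphere_zero_iff_norm.1 (hCS hgC)
  refine ⟨hCS hgC, ?_⟩
  by_contra hne
  obtain ⟨f, hf, hft, hmid⟩ := exists_apply_eq_norm_midpoint_lt_one hx₀.le hg.le hne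
  have hfC : f ∈ C := hAC <| by
    rw [setOf_mem_sphere_and_apply_eq t₀ hx₀]
    exact ⟨mem_closedBall_zero_iff.2 hf, hft⟩
  exact hmid.ne (mem_sphere_zero_iff_norm.1 (hCS (hC.midpoint_mem hfC hgC)))

/-- Let `X` be a strictly convex real Banach space and `K` a locally compact Hausdorff
space.  For every `t₀ ∈ K` and every norm-one `x₀ ∈ X`, the set
`A(t₀, x₀) = {f ∈ S_{C₀(K,X)} : f t₀ = x₀}` is a maximal convex subset of the unit sphere
of `C₀(K, X)`: it is convex and coincides with any convex subset of the sphere containing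
it. -/
theorem czero_face_maximal_convex (X : Type*) [NormedAddCommGroup X] [NormedSpace ℝ X]
    [CompleteSpace X] [StrictConvexSpace ℝ X]
    (K : Type*) [TopologicalSpace K] [LocallyCompactSpace K] [T2Space K]
    (t₀ : K) (x₀ : X) (hx₀ : ‖x₀‖ = 1) :
    Convex ℝ {f : C₀(K, X) | f ∈ Metric.sphere (0 : C₀(K, X)) 1 ∧ f t₀ = x₀} ∧
    ∀ C : Set C₀(K, X), C ⊆ Metric.sphere (0 : C₀(K, X)) 1 → Convex ℝ C →
      {f : C₀(K, X) | f ∈ Metric.sphere (0 : C₀(K, X)) 1 ∧ f t₀ = x₀} ⊆ C →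
      C = {f : C₀(K, X) | f ∈ Metric.sphere (0 : C₀(K, X)) 1 ∧ f t₀ = x₀} :=
  czero_face_maximal_convex_general X K t₀ x₀ hx₀
end
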